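/- arXiv:2508.12934 — 3 statements merged into one kernel-verified Lean document; each statement's English description precedes it below -/
import Mathlib

section
/- A contest success function on N satisfies strict monotonicity (SM) and Luce's choice axiom (LCA) if and only if there exist strictly increasing functions f_j : ℝ_+ → ℝ_+ (j ∈ N), each nonnegative, such that for every subset M ⊆ N with |M| ≥ 2, every i ∈ M, and every effort vector x^M ∈ ℝ_+^M \ {0}: p_i^M(x^M) = f_i(x_i) / Σ_{j∈M} f_j(x_j). -/
open Finset

/-- A joint effort vector: componentwise nonnegative, and active on `M`. -/
def FeasibleOn {N : Type*} (M : Finset N) (x : N → ℝ) : Prop :=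
  (∀ i, 0 ≤ x i) ∧ ∃ i ∈ M, x i ≠ 0

/-- A feasible effort vector for the full contest: `x ∈ ℝ₊^N \ {0}`. -/
def Feasible {N : Type*} (x : N → ℝ) : Prop :=
  (∀ i, 0 ≤ x i) ∧ ∃ i, x i ≠ 0

/-- A contest success function (CSF) on contestant set `N`: for every `M ⊆ N` with
`|M| ≥ 2`, a family of functions `p M · i` for `i ∈ M`, valued in `[0,1]`, depending
only on the coordinates in `M`, and summing to one over `M`. -/
structure CSF (N : Type*) where
  p : Finset N → (N → ℝ) → N → ℝ
  restrict : ∀ M : Finset N, 2 ≤ M.card → ∀ x y : N → ℝ, FeasibleOn M x →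
    (∀ i ∈ M, x i = y i) → ∀ i ∈ M, p M x i = p M y i
  nonneg : ∀ M : Finset N, 2 ≤ M.card → ∀ x, FeasibleOn M x → ∀ i ∈ M, 0 ≤ p M x i
  le_one : ∀ M : Finset N, 2 ≤ M.card → ∀ x, FeasibleOn M x → ∀ i ∈ M, p M x i ≤ 1
  sum_eq_one : ∀ M : Finset N, 2 ≤ M.card → ∀ x, FeasibleOn M x → ∑ i ∈ M, p M x i = 1

namespace CSF

variable {N : Type*} [Fintype N] [DecidableEq N]

/-- Winning probability in the full contest. -/
def P (c : CSF N) (x : N → ℝ) (i : N) : ℝ := c.p Finset.univ x i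

/-- Strict monotonicity (SM). -/
def SM (c : CSF N) : Prop :=
  ∀ x, Feasible x → ∀ i : N, c.P x i < 1 → ∀ xi' : ℝ, x i < xi' →
    c.P x i < c.P (Function.update x i xi') i

/-- Luce's choice axiom (LCA). -/
def LCA (c : CSF N) : Prop :=
  ∀ x, Feasible x → ∀ M : Finset N, 2 ≤ M.card → (∃ i ∈ M, x i ≠ 0) →
    ∀ i ∈ M, c.P x i = c.p M x i * ∑ j ∈ M, c.P x j

/-- Deviation `d_{ij}(x)`: the externality of `i`'s activity on `j`'s allocation. -/
noncomputable def dev (c : CSF N) (x : N → ℝ) (i j : N) : ℝ :=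
  (c.P (Function.update x i 0) j - c.P x j) / c.P (Function.update x i 0) j

/-- Homogeneous relative externality (HRE). -/
def HRE (c : CSF N) : Prop :=
  ∀ x, Feasible x → ∀ i j : N, i ≠ j → 0 < x i → 0 < x j → ∀ l : ℝ, 0 < l →
    0 < c.P (Function.update x i 0) j → 0 < c.P (Function.update x j 0) i →
    0 < c.P (Function.update (fun k => l * x k) i 0) j →
    0 < c.P (Function.update (fun k => l * x k) j 0) i →
    c.dev x j i ≠ 0 → c.dev (fun k => l * x k) j i ≠ 0 →
    c.dev x i j / c.dev x j i
      = c.dev (fun k => l * x k) i j / c.dev (fun k => l * x k) j i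

/-- Relative homogeneity (RH). -/
def RH (c : CSF N) : Prop :=
  ∀ x, Feasible x → ∀ i j : N, 0 < x i → 0 < x j → ∀ l : ℝ, 0 < l →
    c.P x i / c.P x j = c.P (fun k => l * x k) i / c.P (fun k => l * x k) j

/-- Homogeneity (HOM). -/
def HOM (c : CSF N) : Prop :=
  ∀ x, Feasible x → ∀ i : N, ∀ l : ℝ, 0 < l → c.P (fun k => l * x k) i = c.P x i

/-- Anonymity (ANY). -/
def ANY (c : CSF N) : Prop :=
  ∀ π : Equiv.Perm N, ∀ x, Feasible x → ∀ i : N,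
    c.P (fun k => x (π.symm k)) (π i) = c.P x i

/-- No advantageous reallocation (NAR). -/
def NAR (c : CSF N) : Prop :=
  ∀ x, Feasible x → ∀ i j : N, i ≠ j → ∀ xi' xj' : ℝ, 0 ≤ xi' → 0 ≤ xj' →
    xi' + xj' = x i + x j → ∀ k : N, k ≠ i → k ≠ j →
    c.P (Function.update (Function.update x i xi') j xj') k = c.P x k

/-- Dummy consistency (DC). -/
def DC (c : CSF N) : Prop :=
  ∀ x, Feasible x → ∀ i : N, x i = 0 → ∀ j : N, j ≠ i →
    c.P x j = c.p (Finset.univ.erase i) x j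

/-- Clark–Riis independence (CRI). -/
def CRI (c : CSF N) : Prop :=
  ∀ x, Feasible x → ∀ i j : N, i ≠ j → c.P x j < 1 →
    c.P (Function.update x j 0) i = c.P x i / (1 - c.P x j)

/-- Split-proofness (SP). -/
def SP (c : CSF N) : Prop :=
  ∀ x, Feasible x → ∀ i j : N, i ≠ j →
    c.P x i + c.P x j ≤ c.p (Finset.univ.erase j) (Function.update x i (x i + x j)) i

/-- Collusion-proofness (CP). -/
def CP (c : CSF N) : Prop :=
  ∀ x, Feasible x → ∀ i j : N, i ≠ j →
    c.p (Finset.univ.erase j) (Function.update x i (x i + x j)) i ≤ c.P x i + c.P x j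

end CSF


section AuxProof
set_option linter.unusedSectionVars false

open CSF

variable {N : Type*} [Fintype N] [DecidableEq N]

private lemma card2 (hN : 3 ≤ Fintype.card N) : 2 ≤ (univ : Finset N).card := by
  rw [Finset.card_univ]; omega

private lemma feasOnUniv {x : N → ℝ} (hx : Feasible x) : FeasibleOn univ x := by
  obtain ⟨h0, i, hi⟩ := hx; exact ⟨h0, i, mem_univ i, hi⟩

variable (C : CSF N)

private lemma Pn (hN : 3 ≤ Fintype.card N) {x : N → ℝ} (hx : Feasible x) (i : N) :
    0 ≤ C.P x i :=
  C.nonneg univ (card2 hN) x (feasOnUniv hx) i (mem_univ i)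

private lemma P1 (hN : 3 ≤ Fintype.card N) {x : N → ℝ} (hx : Feasible x) (i : N) :
    C.P x i ≤ 1 :=
  C.le_one univ (card2 hN) x (feasOnUniv hx) i (mem_univ i)

private lemma Psum (hN : 3 ≤ Fintype.card N) {x : N → ℝ} (hx : Feasible x) :
    ∑ i, C.P x i = 1 :=
  C.sum_eq_one univ (card2 hN) x (feasOnUniv hx)

private lemma pair_le (hN : 3 ≤ Fintype.card N) {x : N → ℝ} (hx : Feasible x) {i k : N}
    (h : i ≠ k) : C.P x i + C.P x k ≤ 1 := by
  have hsub := Finset.sum_le_sum_of_subset_of_nonneg (Finset.subset_univ {i, k})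
    (fun m _ _ => Pn C hN hx m)
  rwa [Finset.sum_pair h, Psum C hN hx] at hsub


private lemma Ppos (hSM : C.SM) (hL : C.LCA) (hN : 3 ≤ Fintype.card N) {x : N → ℝ}
    (hx : Feasible x) {i : N} (hxi : 0 < x i) : 0 < C.P x i := by
  by_contra hcon
  have hPi : C.P x i = 0 := le_antisymm (not_lt.mp hcon) (Pn C hN hx i)
  obtain ⟨j, -, hj⟩ : ∃ j ∈ univ, (0:ℝ) < C.P x j := by
    refine Finset.exists_lt_of_sum_lt ?_
    rw [Psum C hN hx]; simp
  have hij : i ≠ j := by rintro rfl; rw [hPi] at hj; exact lt_irrefl 0 hj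
  have h2 : 2 ≤ ({i, j} : Finset N).card := le_of_eq (Finset.card_pair hij).symm
  have hfeasij : FeasibleOn {i, j} x := ⟨hx.1, i, by simp, ne_of_gt hxi⟩
  have hlca := hL x hx {i, j} h2 ⟨i, by simp, ne_of_gt hxi⟩ i (by simp)
  rw [Finset.sum_pair hij, hPi] at hlca
  have hq : C.p {i, j} x i = 0 := by
    rcases mul_eq_zero.mp hlca.symm with h | h
    · exact h
    · exfalso; rw [zero_add] at h; exact (ne_of_gt hj) h
  have K : ∀ w, Feasible w → w i = x i → w j = x j → C.P w i = 0 := by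
    intro w hw hwi hwj
    have hag : ∀ m ∈ ({i, j} : Finset N), x m = w m := by
      intro m hm
      rcases Finset.mem_insert.mp hm with rfl | hm
      · exact hwi.symm
      · rw [Finset.mem_singleton] at hm; subst hm; exact hwj.symm
    have hq' := C.restrict {i, j} h2 x w hfeasij hag i (by simp)
    have hlcw := hL w hw {i, j} h2 ⟨i, by simp, by rw [hwi]; exact ne_of_gt hxi⟩ i (by simp)
    rw [← hq', hq, zero_mul] at hlcw
    exact hlcw
  obtain ⟨k, hki, hkj⟩ : ∃ k, k ≠ i ∧ k ≠ j := by
    by_contra h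
    push_neg at h
    have hsub : (univ : Finset N) ⊆ {i, j} := by
      intro m _
      rcases eq_or_ne m i with rfl | hmi
      · simp
      · rcases h m hmi with rfl; simp
    have := Finset.card_le_card hsub
    rw [Finset.card_univ, Finset.card_pair hij] at this
    omega
  set dvec := Function.update x k (x k + 1) with hdvec
  have hdfe : Feasible dvec := by
    refine ⟨fun m => ?_, k, ?_⟩
    · rcases eq_or_ne m k with rfl | hm
      · rw [hdvec, Function.update_self]; linarith [hx.1 m]
      · rw [hdvec, Function.update_of_ne hm]; exact hx.1 m
    · rw [hdvec, Function.update_self]; have := hx.1 k; positivity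
  have hdi : dvec i = x i := Function.update_of_ne (Ne.symm hki) _ _
  have hdj : dvec j = x j := Function.update_of_ne (Ne.symm hkj) _ _
  have hPd : C.P dvec i = 0 := K dvec hdfe hdi hdj
  set r := Function.update dvec i (x i / 2) with hr
  have hrk : r k = x k + 1 := by
    rw [hr, Function.update_of_ne hki, hdvec, Function.update_self]
  have hri : r i = x i / 2 := Function.update_self _ _ _
  have hrfe : Feasible r := by
    refine ⟨fun m => ?_, k, ?_⟩
    · rcases eq_or_ne m i with rfl | hm
      · rw [hr, Function.update_self]; linarith
      · rw [hr, Function.update_of_ne hm]; exact hdfe.1 m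
    · rw [hrk]; have := hx.1 k; positivity
  have hPr : C.P r i = 1 := by
    by_contra hne
    have hlt : C.P r i < 1 := lt_of_le_of_ne (P1 C hN hrfe i) hne
    have hsm := hSM r hrfe i hlt (x i) (by rw [hri]; linarith)
    have hupd : Function.update r i (x i) = dvec := by
      rw [hr, Function.update_idem, ← hdi, Function.update_eq_self]
    rw [hupd, hPd] at hsm
    exact absurd hsm (not_lt.mpr (Pn C hN hrfe i))
  have hPrk : C.P r k = 0 := by
    have hpair := pair_le C hN hrfe (Ne.symm hki)
    have h0 := Pn C hN hrfe k
    rw [hPr] at hpair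
    linarith
  set A := Function.update r k (x k + 2) with hA
  have hAk : A k = x k + 2 := Function.update_self _ _ _
  have hAi : A i = x i / 2 := by rw [hA, Function.update_of_ne (Ne.symm hki)]; exact hri
  have hAfe : Feasible A := by
    refine ⟨fun m => ?_, k, ?_⟩
    · rcases eq_or_ne m k with rfl | hm
      · rw [hA, Function.update_self]; linarith [hx.1 m]
      · rw [hA, Function.update_of_ne hm]; exact hrfe.1 m
    · rw [hAk]; have := hx.1 k; positivity
  have hPAk : 0 < C.P A k := by
    have := hSM r hrfe k (by rw [hPrk]; norm_num) (x k + 2) (by rw [hrk]; linarith)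
    rwa [hPrk, ← hA] at this
  have hPAi : C.P A i < 1 := by
    have hpair := pair_le C hN hAfe (Ne.symm hki)
    linarith
  have hsm2 := hSM A hAfe i hPAi (x i) (by rw [hAi]; linarith)
  set A' := Function.update A i (x i) with hA'
  have hA'i : A' i = x i := Function.update_self _ _ _
  have hA'j : A' j = x j := by
    rw [hA', Function.update_of_ne (Ne.symm hij), hA,
      Function.update_of_ne (Ne.symm hkj), hr, Function.update_of_ne (Ne.symm hij)]
    exact hdj
  have hA'fe : Feasible A' := by
    refine ⟨fun m => ?_, i, by rw [hA'i]; exact ne_of_gt hxi⟩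
    rcases eq_or_ne m i with rfl | hm
    · rw [hA'i]; linarith
    · rw [hA', Function.update_of_ne hm]; exact hAfe.1 m
  have hzero : C.P A' i = 0 := K A' hA'fe hA'i hA'j
  rw [hzero] at hsm2
  exact absurd hsm2 (not_lt.mpr (Pn C hN hAfe i))

private lemma PR (hL : C.LCA) {v w : N → ℝ} (hv : Feasible v) (hw : Feasible w)
    {i j : N} (hij : i ≠ j) (hvi : v i = w i) (hvj : v j = w j)
    (h0 : v i ≠ 0 ∨ v j ≠ 0) :
    C.P v i * C.P w j = C.P w i * C.P v j := by
  have h2 : 2 ≤ ({i, j} : Finset N).card := le_of_eq (Finset.card_pair hij).symm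
  have hfv : FeasibleOn {i, j} v := by
    refine ⟨hv.1, ?_⟩
    rcases h0 with h | h
    exacts [⟨i, by simp, h⟩, ⟨j, by simp, h⟩]
  have hwitv : ∃ m ∈ ({i, j} : Finset N), v m ≠ 0 := hfv.2
  have hwitw : ∃ m ∈ ({i, j} : Finset N), w m ≠ 0 := by
    rcases h0 with h | h
    exacts [⟨i, by simp, hvi ▸ h⟩, ⟨j, by simp, hvj ▸ h⟩]
  have hag : ∀ m ∈ ({i, j} : Finset N), v m = w m := by
    intro m hm
    rcases Finset.mem_insert.mp hm with rfl | hm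
    · exact hvi
    · rw [Finset.mem_singleton] at hm; subst hm; exact hvj
  have hri := C.restrict {i, j} h2 v w hfv hag i (by simp)
  have hrj := C.restrict {i, j} h2 v w hfv hag j (by simp)
  have hvi' := hL v hv {i, j} h2 hwitv i (by simp)
  have hvj' := hL v hv {i, j} h2 hwitv j (by simp)
  have hwi' := hL w hw {i, j} h2 hwitw i (by simp)
  have hwj' := hL w hw {i, j} h2 hwitw j (by simp)
  rw [Finset.sum_pair hij] at hvi' hvj' hwi' hwj'
  rw [← hri] at hwi'
  rw [← hrj] at hwj'
  have key : ∀ qi qj Sv Sw pvi pvj pwi pwj : ℝ, pvi = qi * Sv → pvj = qj * Sv →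
      pwi = qi * Sw → pwj = qj * Sw → pvi * pwj = pwi * pvj := by
    intro qi qj Sv Sw pvi pvj pwi pwj e1 e2 e3 e4
    subst e1; subst e2; subst e3; subst e4; ring
  exact key _ _ _ _ _ _ _ _ hvi' hvj' hwi' hwj'


/-- effort `t` for player `i`, effort 1 for reference `r`, 0 for everyone else. -/
private def XV (r i : N) (t : ℝ) : N → ℝ := fun m => if m = i then t else if m = r then 1 else 0

/-- efforts `s`, `t` for players `i`, `j`, effort 1 for reference `r`, 0 else. -/
private def WV (r i j : N) (s t : ℝ) : N → ℝ :=
  fun m => if m = i then s else if m = j then t else if m = r then 1 else 0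

private lemma XV_i (r i : N) (t : ℝ) : XV r i t i = t := if_pos rfl

private lemma XV_r {r i : N} (h : r ≠ i) (t : ℝ) : XV r i t r = 1 := by
  simp [XV, h]

private lemma XV_feas {r i : N} (h : r ≠ i) {t : ℝ} (ht : 0 ≤ t) : Feasible (XV r i t) := by
  refine ⟨fun m => ?_, r, by rw [XV_r h]; norm_num⟩
  unfold XV
  split_ifs <;> norm_num
  exact ht

private lemma XV_update (r i : N) (t t' : ℝ) :
    Function.update (XV r i t) i t' = XV r i t' := by
  funext m
  rcases eq_or_ne m i with rfl | hm
  · rw [Function.update_self, XV_i]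
  · rw [Function.update_of_ne hm]
    simp [XV, hm]

private lemma WV_i {r i j : N} (hij : i ≠ j) (s t : ℝ) : WV r i j s t i = s := if_pos rfl

private lemma WV_j {r i j : N} (hij : i ≠ j) (s t : ℝ) : WV r i j s t j = t := by
  simp [WV, Ne.symm hij]

private lemma WV_r {r i j : N} (hri : r ≠ i) (hrj : r ≠ j) (s t : ℝ) : WV r i j s t r = 1 := by
  simp [WV, hri, hrj]

private lemma WV_feas {r i j : N} (hri : r ≠ i) (hrj : r ≠ j) {s t : ℝ}
    (hs : 0 ≤ s) (ht : 0 ≤ t) : Feasible (WV r i j s t) := by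
  refine ⟨fun m => ?_, r, by rw [WV_r hri hrj]; norm_num⟩
  unfold WV
  split_ifs <;> norm_num
  exacts [hs, ht]

private noncomputable def fimp (C : CSF N) (a b : N) : N → ℝ → ℝ := fun i t =>
  if i = b then
    (C.P (XV a b t) b / C.P (XV a b t) a) * (C.P (XV b a 1) a / C.P (XV b a 1) b)
  else C.P (XV b i t) i / C.P (XV b i t) b

private lemma alg1 {pva pwb pwa pvb fd pwd fa fb : ℝ} (e1 : pva * pwb = pwa * pvb)
    (e2 : fd * pwa = fa * pwd) (e3 : fb * pwd = fd * pwb)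
    (h1 : fd ≠ 0) (h2 : pwd ≠ 0) : fb * pva = fa * pvb := by
  have key : (fd * pwd) * (fb * pva) = (fd * pwd) * (fa * pvb) := by
    calc (fd * pwd) * (fb * pva) = (fb * pwd) * (fd * pva) := by ring
    _ = (fd * pwb) * (fd * pva) := by rw [e3]
    _ = fd * fd * (pva * pwb) := by ring
    _ = fd * fd * (pwa * pvb) := by rw [e1]
    _ = (fd * pwa) * (fd * pvb) := by ring
    _ = (fa * pwd) * (fd * pvb) := by rw [e2]
    _ = (fd * pwd) * (fa * pvb) := by ring
  exact mul_left_cancel₀ (mul_ne_zero h1 h2) key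


private lemma XV_off {r i j : N} (hj : j ≠ i) (t t' : ℝ) : XV r i t j = XV r i t' j := by
  simp [XV, hj]

section Main

variable (hSM : C.SM) (hL : C.LCA) (hN : 3 ≤ Fintype.card N) {a b d : N}
  (hab : a ≠ b) (had : a ≠ d) (hbd : b ≠ d)

include hSM hL hN hab

private lemma fimp_ne (i : N) (hib : i ≠ b) (t : ℝ) :
    fimp C a b i t = C.P (XV b i t) i / C.P (XV b i t) b := if_neg hib

private lemma fimp_b (t : ℝ) :
    fimp C a b b t = (C.P (XV a b t) b / C.P (XV a b t) a) * fimp C a b a 1 := by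
  rw [fimp, if_pos rfl, fimp_ne C hSM hL hN hab a hab]

private lemma fa1_pos : 0 < fimp C a b a 1 := by
  rw [fimp_ne C hSM hL hN hab a hab]
  have hfe : Feasible (XV b a 1) := XV_feas (Ne.symm hab) zero_le_one
  exact div_pos (Ppos C hSM hL hN hfe (by rw [XV_i]; norm_num))
    (Ppos C hSM hL hN hfe (by rw [XV_r (Ne.symm hab)]; norm_num))

private lemma fimp_pos (i : N) {t : ℝ} (ht : 0 < t) : 0 < fimp C a b i t := by
  rcases eq_or_ne i b with rfl | hib
  · rw [fimp_b C hSM hL hN hab]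
    have hfe : Feasible (XV a i t) := XV_feas hab (le_of_lt ht)
    exact mul_pos (div_pos (Ppos C hSM hL hN hfe (by rw [XV_i]; exact ht))
      (Ppos C hSM hL hN hfe (by rw [XV_r hab]; norm_num))) (fa1_pos C hSM hL hN hab)
  · rw [fimp_ne C hSM hL hN hab i hib]
    have hfe : Feasible (XV b i t) := XV_feas (Ne.symm hib) (le_of_lt ht)
    exact div_pos (Ppos C hSM hL hN hfe (by rw [XV_i]; exact ht))
      (Ppos C hSM hL hN hfe (by rw [XV_r (Ne.symm hib)]; norm_num))

private lemma fimp_nonneg (i : N) {t : ℝ} (ht : 0 ≤ t) : 0 ≤ fimp C a b i t := by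
  rcases eq_or_ne i b with rfl | hib
  · rw [fimp_b C hSM hL hN hab]
    have hfe : Feasible (XV a i t) := XV_feas hab ht
    exact mul_nonneg (div_nonneg (Pn C hN hfe _) (Pn C hN hfe _))
      (le_of_lt (fa1_pos C hSM hL hN hab))
  · rw [fimp_ne C hSM hL hN hab i hib]
    have hfe : Feasible (XV b i t) := XV_feas (Ne.symm hib) ht
    exact div_nonneg (Pn C hN hfe _) (Pn C hN hfe _)

/-- transport along reference `b`: on any feasible vector with `w b = 1`. -/
private lemma LX {i : N} (hib : i ≠ b) {w : N → ℝ} (hw : Feasible w) (hwb : w b = 1) :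
    C.P w i = fimp C a b i (w i) * C.P w b := by
  set X := XV b i (w i) with hX
  have hXfe : Feasible X := XV_feas (Ne.symm hib) (hw.1 i)
  have hXb : 0 < C.P X b := Ppos C hSM hL hN hXfe (by rw [hX, XV_r (Ne.symm hib)]; norm_num)
  have hpr := PR C hL hw hXfe hib (by rw [hX, XV_i]) (by rw [hX, XV_r (Ne.symm hib), hwb])
    (Or.inr (by rw [hwb]; norm_num))
  -- hpr : C.P w i * C.P X b = C.P X i * C.P w b
  have hf : fimp C a b i (w i) * C.P X b = C.P X i := by
    rw [fimp_ne C hSM hL hN hab i hib, ← hX, div_mul_cancel₀ _ (ne_of_gt hXb)]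
  have : C.P w i * C.P X b = fimp C a b i (w i) * C.P w b * C.P X b := by
    rw [hpr, ← hf]; ring
  exact mul_right_cancel₀ (ne_of_gt hXb) this

/-- transport along reference `a` for player `b`. -/
private lemma LY {w : N → ℝ} (hw : Feasible w) (hwa : w a = 1) :
    fimp C a b a 1 * C.P w b = fimp C a b b (w b) * C.P w a := by
  set Y := XV a b (w b) with hY
  have hYfe : Feasible Y := XV_feas hab (hw.1 b)
  have hYa : 0 < C.P Y a := Ppos C hSM hL hN hYfe (by rw [hY, XV_r hab]; norm_num)
  have hpr := PR C hL hw hYfe (Ne.symm hab) (by rw [hY, XV_i]) (by rw [hY, XV_r hab, hwa])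
    (Or.inr (by rw [hwa]; norm_num))
  -- hpr : C.P w b * C.P Y a = C.P Y b * C.P w a
  have hf : fimp C a b b (w b) * C.P Y a = C.P Y b * fimp C a b a 1 := by
    rw [fimp_b C hSM hL hN hab, ← hY]
    field_simp
  have : (fimp C a b a 1 * C.P w b) * C.P Y a = (fimp C a b b (w b) * C.P w a) * C.P Y a := by
    calc (fimp C a b a 1 * C.P w b) * C.P Y a = fimp C a b a 1 * (C.P w b * C.P Y a) := by ring
    _ = fimp C a b a 1 * (C.P Y b * C.P w a) := by rw [hpr]
    _ = (C.P Y b * fimp C a b a 1) * C.P w a := by ring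
    _ = (fimp C a b b (w b) * C.P Y a) * C.P w a := by rw [hf]
    _ = (fimp C a b b (w b) * C.P w a) * C.P Y a := by ring
  exact mul_right_cancel₀ (ne_of_gt hYa) this


/-- ratio lemma, case both `i, k ≠ b`. -/
private lemma L1 {i k : N} (hib : i ≠ b) (hkb : k ≠ b) (hik : i ≠ k)
    {v : N → ℝ} (hv : Feasible v) (h0 : v i ≠ 0 ∨ v k ≠ 0) :
    fimp C a b k (v k) * C.P v i = fimp C a b i (v i) * C.P v k := by
  set w := WV b i k (v i) (v k) with hw
  have hwfe : Feasible w := WV_feas (Ne.symm hib) (Ne.symm hkb) (hv.1 i) (hv.1 k)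
  have hwi : w i = v i := WV_i hik _ _
  have hwk : w k = v k := WV_j hik _ _
  have hwb : w b = 1 := WV_r (Ne.symm hib) (Ne.symm hkb) _ _
  have hPwb : 0 < C.P w b := Ppos C hSM hL hN hwfe (by rw [hwb]; norm_num)
  have e1 := PR C hL hv hwfe hik hwi.symm hwk.symm h0
  have e2 : C.P w i = fimp C a b i (v i) * C.P w b := by
    rw [← hwi]; exact LX C hSM hL hN hab hib hwfe hwb
  have e3 : C.P w k = fimp C a b k (v k) * C.P w b := by
    rw [← hwk]; exact LX C hSM hL hN hab hkb hwfe hwb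
  have key : (fimp C a b k (v k) * C.P v i) * C.P w b
      = (fimp C a b i (v i) * C.P v k) * C.P w b := by
    calc (fimp C a b k (v k) * C.P v i) * C.P w b
        = C.P v i * (fimp C a b k (v k) * C.P w b) := by ring
    _ = C.P v i * C.P w k := by rw [e3]
    _ = C.P w i * C.P v k := e1
    _ = (fimp C a b i (v i) * C.P w b) * C.P v k := by rw [e2]
    _ = (fimp C a b i (v i) * C.P v k) * C.P w b := by ring
  exact mul_right_cancel₀ (ne_of_gt hPwb) key

include had hbd

/-- ratio lemma, case `k = b`, `i ∉ {a, b}`. -/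
private lemma L2main {i : N} (hia : i ≠ a) (hib : i ≠ b)
    {v : N → ℝ} (hv : Feasible v) (h0 : v i ≠ 0 ∨ v b ≠ 0) :
    fimp C a b b (v b) * C.P v i = fimp C a b i (v i) * C.P v b := by
  set w := WV a i b (v i) (v b) with hw
  have hwfe : Feasible w := WV_feas (Ne.symm hia) hab (hv.1 i) (hv.1 b)
  have hwi : w i = v i := WV_i hib _ _
  have hwb : w b = v b := WV_j hib _ _
  have hwa : w a = 1 := WV_r (Ne.symm hia) hab _ _
  have hPwa : 0 < C.P w a := Ppos C hSM hL hN hwfe (by rw [hwa]; norm_num)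
  have e1 := PR C hL hv hwfe hib hwi.symm hwb.symm h0
  -- e1 : C.P v i * C.P w b = C.P w i * C.P v b
  have e2 : fimp C a b a 1 * C.P w i = fimp C a b i (v i) * C.P w a := by
    have h := L1 C hSM hL hN hab hib hab hia hwfe (Or.inr (by rw [hwa]; norm_num))
    rwa [hwa, hwi] at h
  have e3 : fimp C a b a 1 * C.P w b = fimp C a b b (v b) * C.P w a := by
    have h := LY C hSM hL hN hab hwfe hwa
    rwa [hwb] at h
  exact alg1 e1 e2 e3.symm (ne_of_gt (fa1_pos C hSM hL hN hab)) (ne_of_gt hPwa)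

/-- ratio lemma, case `k = b`, `i = a`. -/
private lemma L2sub {v : N → ℝ} (hv : Feasible v) (h0 : v a ≠ 0 ∨ v b ≠ 0) :
    fimp C a b b (v b) * C.P v a = fimp C a b a (v a) * C.P v b := by
  set w := WV d a b (v a) (v b) with hw
  have hwfe : Feasible w := WV_feas had.symm hbd.symm (hv.1 a) (hv.1 b)
  have hwa : w a = v a := WV_i hab _ _
  have hwb : w b = v b := WV_j hab _ _
  have hwd : w d = 1 := WV_r had.symm hbd.symm _ _
  have hPwd : 0 < C.P w d := Ppos C hSM hL hN hwfe (by rw [hwd]; norm_num)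
  have hfd1 : 0 < fimp C a b d 1 := fimp_pos C hSM hL hN hab d one_pos
  have e1 := PR C hL hv hwfe hab hwa.symm hwb.symm h0
  -- e1 : C.P v a * C.P w b = C.P w a * C.P v b
  have e2 : fimp C a b d 1 * C.P w a = fimp C a b a (v a) * C.P w d := by
    have h := L1 C hSM hL hN hab hab hbd.symm had hwfe (Or.inr (by rw [hwd]; norm_num))
    rwa [hwd, hwa] at h
  have e3 : fimp C a b b (v b) * C.P w d = fimp C a b d 1 * C.P w b := by
    have h := L2main C hSM hL hN hab had hbd had.symm hbd.symm hwfe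
      (Or.inl (by rw [hwd]; norm_num))
    rwa [hwd, hwb] at h
  exact alg1 e1 e2 e3 (ne_of_gt hfd1) (ne_of_gt hPwd)

/-- ratio lemma, case `i = b`, `k ∉ {a, b}`. -/
private lemma L3main {k : N} (hka : k ≠ a) (hkb : k ≠ b)
    {v : N → ℝ} (hv : Feasible v) (h0 : v b ≠ 0 ∨ v k ≠ 0) :
    fimp C a b k (v k) * C.P v b = fimp C a b b (v b) * C.P v k := by
  set w := WV a b k (v b) (v k) with hw
  have hwfe : Feasible w := WV_feas hab (Ne.symm hka) (hv.1 b) (hv.1 k)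
  have hwb : w b = v b := WV_i (Ne.symm hkb) _ _
  have hwk : w k = v k := WV_j (Ne.symm hkb) _ _
  have hwa : w a = 1 := WV_r hab (Ne.symm hka) _ _
  have hPwa : 0 < C.P w a := Ppos C hSM hL hN hwfe (by rw [hwa]; norm_num)
  have e1 := PR C hL hv hwfe (Ne.symm hkb) hwb.symm hwk.symm h0
  -- e1 : C.P v b * C.P w k = C.P w b * C.P v k
  have e2 : fimp C a b a 1 * C.P w b = fimp C a b b (v b) * C.P w a := by
    have h := LY C hSM hL hN hab hwfe hwa
    rwa [hwb] at h
  have e3 : fimp C a b k (v k) * C.P w a = fimp C a b a 1 * C.P w k := by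
    have h := L1 C hSM hL hN hab hab hkb (Ne.symm hka) hwfe (Or.inl (by rw [hwa]; norm_num))
    rwa [hwa, hwk] at h
  exact alg1 e1 e2 e3 (ne_of_gt (fa1_pos C hSM hL hN hab)) (ne_of_gt hPwa)

/-- ratio lemma, case `i = b`, `k = a`. -/
private lemma L3sub {v : N → ℝ} (hv : Feasible v) (h0 : v b ≠ 0 ∨ v a ≠ 0) :
    fimp C a b a (v a) * C.P v b = fimp C a b b (v b) * C.P v a := by
  set w := WV d b a (v b) (v a) with hw
  have hwfe : Feasible w := WV_feas hbd.symm had.symm (hv.1 b) (hv.1 a)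
  have hwb : w b = v b := WV_i (Ne.symm hab) _ _
  have hwa : w a = v a := WV_j (Ne.symm hab) _ _
  have hwd : w d = 1 := WV_r hbd.symm had.symm _ _
  have hPwd : 0 < C.P w d := Ppos C hSM hL hN hwfe (by rw [hwd]; norm_num)
  have hfd1 : 0 < fimp C a b d 1 := fimp_pos C hSM hL hN hab d one_pos
  have e1 := PR C hL hv hwfe (Ne.symm hab) hwb.symm hwa.symm h0
  -- e1 : C.P v b * C.P w a = C.P w b * C.P v a
  have e2 : fimp C a b d 1 * C.P w b = fimp C a b b (v b) * C.P w d := by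
    have h := L3main C hSM hL hN hab had hbd had.symm hbd.symm hwfe
      (Or.inr (by rw [hwd]; norm_num))
    rwa [hwd, hwb] at h
  have e3 : fimp C a b a (v a) * C.P w d = fimp C a b d 1 * C.P w a := by
    have h := L1 C hSM hL hN hab hab hbd.symm had hwfe (Or.inr (by rw [hwd]; norm_num))
    rw [hwd, hwa] at h
    exact h.symm
  exact alg1 e1 e2 e3 (ne_of_gt hfd1) (ne_of_gt hPwd)

/-- full ratio lemma. -/
private lemma RL {i k : N} (hik : i ≠ k) {v : N → ℝ} (hv : Feasible v)
    (h0 : v i ≠ 0 ∨ v k ≠ 0) :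
    fimp C a b k (v k) * C.P v i = fimp C a b i (v i) * C.P v k := by
  rcases eq_or_ne i b with rfl | hib
  · rcases eq_or_ne k a with rfl | hka
    · exact L3sub C hSM hL hN hab had hbd hv h0
    · exact L3main C hSM hL hN hab had hbd hka (Ne.symm hik) hv h0
  · rcases eq_or_ne k b with rfl | hkb
    · rcases eq_or_ne i a with rfl | hia
      · exact L2sub C hSM hL hN hab had hbd hv h0
      · exact L2main C hSM hL hN hab had hbd hia hib hv h0
    · exact L1 C hSM hL hN hab hib hkb hik hv h0

/-- ratio lemma without the nonvanishing hypothesis. -/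
private lemma RLfull (i k : N) {v : N → ℝ} (hv : Feasible v) :
    fimp C a b k (v k) * C.P v i = fimp C a b i (v i) * C.P v k := by
  rcases eq_or_ne i k with rfl | hik
  · rfl
  by_cases h0 : v i ≠ 0 ∨ v k ≠ 0
  · exact RL C hSM hL hN hab had hbd hik hv h0
  push_neg at h0
  obtain ⟨m, hm⟩ := hv.2
  have hmi : m ≠ i := by rintro rfl; exact hm h0.1
  have hmk : m ≠ k := by rintro rfl; exact hm h0.2
  have hmpos : 0 < fimp C a b m (v m) := fimp_pos C hSM hL hN hab m
    (lt_of_le_of_ne (hv.1 m) (Ne.symm hm))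
  have h1 := RL C hSM hL hN hab had hbd (Ne.symm hmi) hv (Or.inr hm)
  have h2 := RL C hSM hL hN hab had hbd (Ne.symm hmk) hv (Or.inr hm)
  -- h1 : fimp m (v m) * C.P v i = fimp i (v i) * C.P v m
  -- h2 : fimp m (v m) * C.P v k = fimp k (v k) * C.P v m
  have key : fimp C a b m (v m) * (fimp C a b k (v k) * C.P v i)
      = fimp C a b m (v m) * (fimp C a b i (v i) * C.P v k) := by
    calc fimp C a b m (v m) * (fimp C a b k (v k) * C.P v i)
        = fimp C a b k (v k) * (fimp C a b m (v m) * C.P v i) := by ring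
    _ = fimp C a b k (v k) * (fimp C a b i (v i) * C.P v m) := by rw [h1]
    _ = fimp C a b i (v i) * (fimp C a b k (v k) * C.P v m) := by ring
    _ = fimp C a b i (v i) * (fimp C a b m (v m) * C.P v k) := by rw [h2]
    _ = fimp C a b m (v m) * (fimp C a b i (v i) * C.P v k) := by ring
  exact mul_left_cancel₀ (ne_of_gt hmpos) key

/-- main lemma: the representation of `P`. -/
private lemma ML {v : N → ℝ} (hv : Feasible v) (i : N) :
    C.P v i * (∑ j, fimp C a b j (v j)) = fimp C a b i (v i) := by
  have hsum : ∑ j, fimp C a b j (v j) * C.P v i = ∑ j, fimp C a b i (v i) * C.P v j :=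
    Finset.sum_congr rfl (fun j _ => RLfull C hSM hL hN hab had hbd i j hv)
  calc C.P v i * (∑ j, fimp C a b j (v j))
      = ∑ j, fimp C a b j (v j) * C.P v i := by
        rw [Finset.mul_sum]; exact Finset.sum_congr rfl (fun j _ => mul_comm _ _)
  _ = ∑ j, fimp C a b i (v i) * C.P v j := hsum
  _ = fimp C a b i (v i) * ∑ j, C.P v j := by rw [Finset.mul_sum]
  _ = fimp C a b i (v i) := by rw [Psum C hN hv, mul_one]

private lemma Fpos {v : N → ℝ} (hv : Feasible v) : 0 < ∑ j, fimp C a b j (v j) := by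
  obtain ⟨m, hm⟩ := hv.2
  refine Finset.sum_pos' (fun j _ => fimp_nonneg C hSM hL hN hab j (hv.1 j)) ⟨m, mem_univ m, ?_⟩
  exact fimp_pos C hSM hL hN hab m (lt_of_le_of_ne (hv.1 m) (Ne.symm hm))

private lemma Prep {v : N → ℝ} (hv : Feasible v) (i : N) :
    C.P v i = fimp C a b i (v i) / ∑ j, fimp C a b j (v j) :=
  eq_div_of_mul_eq (ne_of_gt (Fpos C hSM hL hN hab had hbd hv)) (ML C hSM hL hN hab had hbd hv i)


private lemma fmono_aux {r i : N} (hri : r ≠ i) {t t' : ℝ} (ht : 0 ≤ t) (htt : t < t') :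
    fimp C a b i t < fimp C a b i t' := by
  set X := XV r i t with hX
  set X' := XV r i t' with hX'
  have hXfe : Feasible X := XV_feas hri ht
  have hX'fe : Feasible X' := XV_feas hri (le_trans ht (le_of_lt htt))
  set Ci := ∑ j ∈ univ.erase i, fimp C a b j (X j) with hCi
  have hFX : (∑ j, fimp C a b j (X j)) = fimp C a b i t + Ci := by
    rw [← Finset.add_sum_erase univ (fun j => fimp C a b j (X j)) (mem_univ i), hX, XV_i]
  have hFX' : (∑ j, fimp C a b j (X' j)) = fimp C a b i t' + Ci := by
    rw [← Finset.add_sum_erase univ (fun j => fimp C a b j (X' j)) (mem_univ i), hX', XV_i]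
    congr 1
    refine Finset.sum_congr rfl (fun j hj => ?_)
    rw [hX]
    exact congrArg (fimp C a b j) (XV_off (Finset.ne_of_mem_erase hj) t' t)
  have hCpos : 0 < Ci := by
    refine Finset.sum_pos' (fun j hj => fimp_nonneg C hSM hL hN hab j (hXfe.1 j))
      ⟨r, Finset.mem_erase.mpr ⟨hri, mem_univ r⟩, ?_⟩
    rw [hX, XV_r hri]
    exact fimp_pos C hSM hL hN hab r one_pos
  have hPXr : 0 < C.P X r := Ppos C hSM hL hN hXfe (by rw [hX, XV_r hri]; norm_num)
  have hlt : C.P X i < 1 := by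
    have := pair_le C hN hXfe (Ne.symm hri)
    linarith
  have hsm := hSM X hXfe i hlt t' (by rw [hX, XV_i]; exact htt)
  rw [hX, XV_update, ← hX'] at hsm
  have h1 : C.P X i = fimp C a b i t / (fimp C a b i t + Ci) := by
    rw [Prep C hSM hL hN hab had hbd hXfe i, hFX]
    congr 2
    rw [hX, XV_i]
  have h2 : C.P X' i = fimp C a b i t' / (fimp C a b i t' + Ci) := by
    rw [Prep C hSM hL hN hab had hbd hX'fe i, hFX']
    congr 2
    rw [hX', XV_i]
  rw [h1, h2] at hsm
  have hnn := fimp_nonneg C hSM hL hN hab i ht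
  have hnn' := fimp_nonneg C hSM hL hN hab i (le_trans ht (le_of_lt htt))
  rw [div_lt_div_iff₀ (by linarith) (by linarith)] at hsm
  nlinarith

private lemma fmono (i : N) : StrictMonoOn (fimp C a b i) (Set.Ici 0) := by
  intro t ht t' _ htt
  rcases eq_or_ne i b with rfl | hib
  · exact fmono_aux C hSM hL hN hab had hbd hab ht htt
  · exact fmono_aux C hSM hL hN hab had hbd (Ne.symm hib) ht htt

private lemma formulaM (M : Finset N) (hM : 2 ≤ M.card) (x : N → ℝ) (hxM : FeasibleOn M x)
    (i : N) (hiM : i ∈ M) :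
    C.p M x i = fimp C a b i (x i) / ∑ j ∈ M, fimp C a b j (x j) := by
  set y : N → ℝ := fun m => if m ∈ M then x m else 0 with hy
  obtain ⟨m0, hm0M, hm0⟩ := hxM.2
  have hym0 : y m0 = x m0 := by rw [hy]; simp [hm0M]
  have hyfe : Feasible y := by
    refine ⟨fun m => ?_, m0, by rw [hym0]; exact hm0⟩
    rw [hy]
    dsimp only
    split_ifs
    · exact hxM.1 m
    · exact le_refl 0
  have hagree : ∀ m ∈ M, x m = y m := by
    intro m hm
    rw [hy]
    simp [hm]
  have hres := C.restrict M hM x y hxM hagree i hiM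
  have hlca := hL y hyfe M hM ⟨m0, hm0M, by rw [hym0]; exact hm0⟩ i hiM
  set F := ∑ j, fimp C a b j (y j) with hF
  set S := ∑ j ∈ M, fimp C a b j (x j) with hS
  have hFpos : 0 < F := Fpos C hSM hL hN hab had hbd hyfe
  have hSpos : 0 < S := by
    refine Finset.sum_pos' (fun j _ => fimp_nonneg C hSM hL hN hab j (hxM.1 j))
      ⟨m0, hm0M, fimp_pos C hSM hL hN hab m0 (lt_of_le_of_ne (hxM.1 m0) (Ne.symm hm0))⟩
  have hPyi : C.P y i = fimp C a b i (x i) / F := by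
    rw [Prep C hSM hL hN hab had hbd hyfe i, ← hF]
    congr 2
    exact (hagree i hiM).symm
  have hPsum : ∑ j ∈ M, C.P y j = S / F := by
    rw [hS, Finset.sum_div]
    refine Finset.sum_congr rfl (fun j hj => ?_)
    rw [Prep C hSM hL hN hab had hbd hyfe j, ← hF, hagree j hj]
  rw [hPyi, hPsum] at hlca
  rw [hres, eq_div_iff (ne_of_gt hSpos)]
  field_simp at hlca
  linarith

end Main

private lemma exists_three (hN : 3 ≤ Fintype.card N) : ∃ a b d : N, a ≠ b ∧ a ≠ d ∧ b ≠ d := by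
  obtain ⟨a, b, hab⟩ := Fintype.one_lt_card_iff.mp (show 1 < Fintype.card N by omega)
  have hex : ∃ e : N, e ≠ a ∧ e ≠ b := by
    by_contra h
    push_neg at h
    have hsub : (univ : Finset N) ⊆ {a, b} := by
      intro m _
      rcases eq_or_ne m a with rfl | hma
      · simp
      · rw [h m hma]; simp
    have := Finset.card_le_card hsub
    rw [Finset.card_univ, Finset.card_pair hab] at this
    omega
  obtain ⟨e, hea, heb⟩ := hex
  exact ⟨a, b, e, hab, Ne.symm hea, Ne.symm heb⟩

end AuxProof

/-- SM and LCA hold iff the CSF has an asymmetric logit form with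
strictly increasing nonnegative impact functions. -/
theorem statement0 {N : Type*} [Fintype N] [DecidableEq N]
    (hN : 3 ≤ Fintype.card N) (c : CSF N) :
    (c.SM ∧ c.LCA) ↔
      ∃ f : N → ℝ → ℝ,
        (∀ j, StrictMonoOn (f j) (Set.Ici 0)) ∧
        (∀ j, ∀ t : ℝ, 0 ≤ t → 0 ≤ f j t) ∧
        (∀ M : Finset N, 2 ≤ M.card → ∀ x, FeasibleOn M x → ∀ i ∈ M,
          c.p M x i = f i (x i) / ∑ j ∈ M, f j (x j)) := by
  constructor
  · rintro ⟨hSM, hL⟩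
    obtain ⟨a, b, d, hab, had, hbd⟩ := exists_three hN
    exact ⟨fimp c a b, fun j => fmono c hSM hL hN hab had hbd j,
      fun j t ht => fimp_nonneg c hSM hL hN hab j ht,
      fun M hM x hxM i hiM => formulaM c hSM hL hN hab had hbd M hM x hxM i hiM⟩
  · rintro ⟨f, hmono, hnn, hform⟩
    have hfpos : ∀ (j : N) {t : ℝ}, 0 < t → 0 < f j t := by
      intro j t ht
      have := hmono j (Set.mem_Ici.mpr le_rfl) (Set.mem_Ici.mpr (le_of_lt ht)) ht
      have h0 := hnn j 0 le_rfl
      linarith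
    have hPform : ∀ x, Feasible x → ∀ i : N, c.P x i = f i (x i) / ∑ j, f j (x j) :=
      fun x hx i => hform univ (card2 hN) x (feasOnUniv hx) i (mem_univ i)
    have hFpos : ∀ {x : N → ℝ}, Feasible x → 0 < ∑ j, f j (x j) := by
      intro x hx
      obtain ⟨m, hm⟩ := hx.2
      exact Finset.sum_pos' (fun j _ => hnn j _ (hx.1 j))
        ⟨m, mem_univ m, hfpos m (lt_of_le_of_ne (hx.1 m) (Ne.symm hm))⟩
    constructor
    · -- SM
      intro x hx i hPi xi' hlt
      have hxi'pos : 0 < xi' := lt_of_le_of_lt (hx.1 i) hlt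
      set x' := Function.update x i xi' with hx'def
      have hx'fe : Feasible x' := by
        refine ⟨fun m => ?_, i, by rw [hx'def, Function.update_self]; exact ne_of_gt hxi'pos⟩
        rcases eq_or_ne m i with rfl | hm
        · rw [hx'def, Function.update_self]; exact le_of_lt hxi'pos
        · rw [hx'def, Function.update_of_ne hm]; exact hx.1 m
      set Ci := ∑ j ∈ univ.erase i, f j (x j) with hCi
      have hsplit : ∑ j, f j (x j) = f i (x i) + Ci :=
        (Finset.add_sum_erase univ (fun j => f j (x j)) (mem_univ i)).symm
      have hsplit' : ∑ j, f j (x' j) = f i xi' + Ci := by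
        rw [← Finset.add_sum_erase univ (fun j => f j (x' j)) (mem_univ i), hx'def,
          Function.update_self]
        congr 1
        refine Finset.sum_congr rfl (fun j hj => ?_)
        rw [Function.update_of_ne (Finset.ne_of_mem_erase hj)]
      have hCnn : 0 ≤ Ci := Finset.sum_nonneg (fun j _ => hnn j _ (hx.1 j))
      have hFx : 0 < ∑ j, f j (x j) := hFpos hx
      have hPx : c.P x i = f i (x i) / (f i (x i) + Ci) := by
        rw [hPform x hx i, hsplit]
      have hPx' : c.P x' i = f i xi' / (f i xi' + Ci) := by
        rw [hPform x' hx'fe i, hsplit', hx'def, Function.update_self]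
      have hCpos : 0 < Ci := by
        by_contra hc
        have hC0 : Ci = 0 := le_antisymm (not_lt.mp hc) hCnn
        rw [hsplit, hC0, add_zero] at hFx
        rw [hPx, hC0, add_zero, div_self (ne_of_gt hFx)] at hPi
        exact lt_irrefl 1 hPi
      have hfi : f i (x i) < f i xi' :=
        hmono i (Set.mem_Ici.mpr (hx.1 i)) (Set.mem_Ici.mpr (le_of_lt hxi'pos)) hlt
      rw [hPx, hPx']
      have h1 : 0 < f i (x i) + Ci := by have := hnn i (x i) (hx.1 i); linarith
      have h2 : 0 < f i xi' + Ci := by have := hnn i xi' (le_of_lt hxi'pos); linarith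
      rw [div_lt_div_iff₀ h1 h2]
      nlinarith
    · -- LCA
      intro x hx M hM hwit i hiM
      obtain ⟨m0, hm0M, hm0⟩ := hwit
      have hXM : FeasibleOn M x := ⟨hx.1, m0, hm0M, hm0⟩
      have hSpos : 0 < ∑ j ∈ M, f j (x j) :=
        Finset.sum_pos' (fun j _ => hnn j _ (hx.1 j))
          ⟨m0, hm0M, hfpos m0 (lt_of_le_of_ne (hx.1 m0) (Ne.symm hm0))⟩
      have hFx : 0 < ∑ j, f j (x j) := hFpos hx
      have hsum : ∑ j ∈ M, c.P x j = (∑ j ∈ M, f j (x j)) / ∑ j, f j (x j) := by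
        rw [Finset.sum_div]
        exact Finset.sum_congr rfl (fun j _ => hPform x hx j)
      rw [hPform x hx i, hform M hM x hXM i hiM, hsum, div_mul_div_comm,
        mul_comm (∑ j ∈ M, f j (x j)) (∑ j, f j (x j)),
        mul_div_mul_right _ _ (ne_of_gt hSpos)]
end

section
/- A contest success function on N satisfies strict monotonicity (SM), Luce's choice axiom (LCA), and homogeneous relative externality (HRE) if and only if there exist parameters r > 0 and, for each j ∈ N, a_j > 0 and b_j ≥ 0 such that for every subset M ⊆ N with |M| ≥ 2, every i ∈ M, and every effort vector x^M ∈ ℝ_+^M \ {0}: p_i^M(x^M) = (b_i + a_i x_i^r) / Σ_{j∈M} (b_j + a_j x_j^r). -/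
open Finset

set_option linter.unusedSectionVars false

namespace Dev


/-- A strictly monotone multiplicative self-map of `(0,∞)` is a power function. -/
lemma power_of_mono_mul (h : ℝ → ℝ) (hpos : ∀ l : ℝ, 0 < l → 0 < h l)
    (hmul : ∀ a b : ℝ, 0 < a → 0 < b → h (a * b) = h a * h b)
    (hmono : ∀ a b : ℝ, 0 < a → a < b → h a < h b) :
    ∃ r : ℝ, 0 < r ∧ ∀ l : ℝ, 0 < l → h l = l ^ r := by
  set H : ℝ → ℝ := fun u => Real.log (h (Real.exp u)) with hH
  have Hadd : ∀ u v : ℝ, H (u + v) = H u + H v := by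
    intro u v
    have h1 : (0:ℝ) < h (Real.exp u) := hpos _ (Real.exp_pos u)
    have h2 : (0:ℝ) < h (Real.exp v) := hpos _ (Real.exp_pos v)
    simp only [hH, Real.exp_add, hmul _ _ (Real.exp_pos u) (Real.exp_pos v),
      Real.log_mul h1.ne' h2.ne']
  have Hmono : ∀ u v : ℝ, u < v → H u < H v := by
    intro u v huv
    exact Real.log_lt_log (hpos _ (Real.exp_pos u))
      (hmono _ _ (Real.exp_pos u) (Real.exp_lt_exp.2 huv))
  have H0 : H 0 = 0 := by
    have h1 : h 1 = h 1 * h 1 := by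
      have := hmul 1 1 one_pos one_pos
      simpa using this
    have hone : h 1 = 1 := by
      have hp := hpos 1 one_pos
      nlinarith
    simp [hH, hone]
  set φ : ℝ →+ ℝ := AddMonoidHom.mk' H Hadd with hφ
  have hrat : ∀ q : ℚ, H (q : ℝ) = (q : ℝ) * H 1 := by
    intro q
    have := map_ratCast_smul φ ℝ ℝ q (1 : ℝ)
    simpa [mul_comm, hφ] using this
  have hr1 : 0 < H 1 := by
    have := Hmono 0 1 one_pos
    rw [H0] at this; exact this
  have Hlin : ∀ u : ℝ, H u = u * H 1 := by
    intro u
    by_contra hne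
    rcases lt_or_gt_of_ne hne with hlt | hgt
    · -- H u < u * H 1 : pick rational q with H u / H 1 < q < u
      obtain ⟨q, hq1, hq2⟩ := exists_rat_btwn (show H u / H 1 < u by
        rw [div_lt_iff₀ hr1]; linarith)
      rw [div_lt_iff₀ hr1] at hq1
      have h1 : H u < H (q : ℝ) := by rw [hrat]; linarith
      have h2 : H (q : ℝ) < H u := Hmono _ _ hq2
      linarith
    · obtain ⟨q, hq1, hq2⟩ := exists_rat_btwn (show u < H u / H 1 by
        rw [lt_div_iff₀ hr1]; linarith)
      rw [lt_div_iff₀ hr1] at hq2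
      have h1 : H (q : ℝ) < H u := by rw [hrat]; linarith
      have h2 : H u < H (q : ℝ) := Hmono _ _ hq1
      linarith
  refine ⟨H 1, hr1, fun l hl => ?_⟩
  have : H (Real.log l) = Real.log (h l) := by
    simp [hH, Real.exp_log hl]
  rw [Hlin] at this
  have hhl : 0 < h l := hpos l hl
  rw [Real.rpow_def_of_pos hl, this, Real.exp_log hhl]



open CSF

variable {N : Type*} [Fintype N] [DecidableEq N]

lemma exists_third (hN : 3 ≤ Fintype.card N) (i j : N) : ∃ m : N, m ≠ i ∧ m ≠ j := by
  by_contra h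
  push_neg at h
  have hsub : (Finset.univ : Finset N) ⊆ {i, j} := by
    intro m _
    rcases Decidable.eq_or_ne m i with rfl | hne
    · exact mem_insert_self _ _
    · simp [h m hne]
  have := (card_le_card hsub).trans (card_insert_le _ _)
  simp [Finset.card_univ] at this
  omega

lemma feasibleOn_univ {x : N → ℝ} (hx : Feasible x) : FeasibleOn Finset.univ x :=
  ⟨hx.1, hx.2.choose, mem_univ _, hx.2.choose_spec⟩

lemma two_le_card_univ (hN : 3 ≤ Fintype.card N) : 2 ≤ (Finset.univ : Finset N).card := by
  rw [Finset.card_univ]; omega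

variable (hN : 3 ≤ Fintype.card N) (c : CSF N)

include hN

lemma P_nonneg {x : N → ℝ} (hx : Feasible x) (i : N) : 0 ≤ c.P x i :=
  c.nonneg _ (two_le_card_univ hN) x (feasibleOn_univ hx) i (mem_univ i)

lemma P_le_one {x : N → ℝ} (hx : Feasible x) (i : N) : c.P x i ≤ 1 :=
  c.le_one _ (two_le_card_univ hN) x (feasibleOn_univ hx) i (mem_univ i)

lemma P_sum {x : N → ℝ} (hx : Feasible x) : ∑ i, c.P x i = 1 :=
  c.sum_eq_one _ (two_le_card_univ hN) x (feasibleOn_univ hx)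

lemma claim1 (hLCA : c.LCA) {x x' : N → ℝ} (hx : Feasible x) (hx' : Feasible x')
    {i j : N} (hij : i ≠ j) (hi : 0 < x i) (hxi : x i = x' i) (hxj : x j = x' j) :
    c.P x i * c.P x' j = c.P x j * c.P x' i := by
  set M : Finset N := {i, j} with hM
  have hcard : 2 ≤ M.card := by rw [hM, card_pair hij]
  have hiM : i ∈ M := mem_insert_self _ _
  have hjM : j ∈ M := by simp [hM]
  have hex : ∃ k ∈ M, x k ≠ 0 := ⟨i, hiM, hi.ne'⟩
  have hex' : ∃ k ∈ M, x' k ≠ 0 := ⟨i, hiM, hxi ▸ hi.ne'⟩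
  have e1 := hLCA x hx M hcard hex i hiM
  have e2 := hLCA x hx M hcard hex j hjM
  have e3 := hLCA x' hx' M hcard hex' i hiM
  have e4 := hLCA x' hx' M hcard hex' j hjM
  have hrest : ∀ k ∈ M, c.p M x k = c.p M x' k :=
    c.restrict M hcard x x' ⟨hx.1, i, hiM, hi.ne'⟩
      (by intro k hk; rcases mem_insert.1 hk with rfl | hk
          · exact hxi
          · rw [mem_singleton.1 hk]; exact hxj)
  rw [e1, e2, e3, e4, ← hrest i hiM, ← hrest j hjM]
  ring

lemma Ppos (hSM : c.SM) (hLCA : c.LCA) {x : N → ℝ} (hx : Feasible x)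
    {i : N} (hi : 0 < x i) : 0 < c.P x i := by
  by_contra hc
  push_neg at hc
  have hP0 : c.P x i = 0 := le_antisymm hc (P_nonneg hN c hx i)
  -- some other contestant has positive probability
  have hk : ∃ k, 0 < c.P x k := by
    by_contra h
    push_neg at h
    have : ∑ k, c.P x k ≤ 0 := Finset.sum_nonpos (fun k _ => h k)
    rw [P_sum hN c hx] at this; linarith
  obtain ⟨k, hk⟩ := hk
  have hki : k ≠ i := fun h => by rw [h, hP0] at hk; exact lt_irrefl _ hk
  have hik : i ≠ k := fun h => hki h.symm
  set M : Finset N := {i, k} with hM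
  have hcard : 2 ≤ M.card := by rw [hM, card_pair hik]
  have hiM : i ∈ M := mem_insert_self _ _
  have hkM : k ∈ M := by simp [hM]
  have hsum : ∑ j ∈ M, c.P x j = c.P x k := by
    rw [hM, Finset.sum_pair hik, hP0, zero_add]
  have e1 := hLCA x hx M hcard ⟨i, hiM, hi.ne'⟩ i hiM
  rw [hP0, hsum] at e1
  have hp0 : c.p M x i = 0 := by
    rcases mul_eq_zero.1 e1.symm with h | h
    · exact h
    · exact absurd h hk.ne'
  obtain ⟨m, hmi, hmk⟩ := exists_third hN i k
  set v : N → ℝ := Function.update x m (x m + 1) with hv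
  have hvi : v i = x i := Function.update_of_ne (fun h => hmi h.symm) _ _
  have hvk : v k = x k := Function.update_of_ne (fun h => hmk h.symm) _ _
  have hvfeas : Feasible v := by
    refine ⟨fun j => ?_, i, by rw [hvi]; exact hi.ne'⟩
    rcases Decidable.eq_or_ne j m with rfl | hjm
    · rw [hv, Function.update_self]; linarith [hx.1 j]
    · rw [hv, Function.update_of_ne hjm]; exact hx.1 j
  have hpv0 : c.p M v i = 0 := by
    rw [← hp0]
    exact c.restrict M hcard v x ⟨hvfeas.1, i, hiM, by rw [hvi]; exact hi.ne'⟩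
      (by intro j hj; rcases mem_insert.1 hj with rfl | hj
          · exact hvi
          · rw [mem_singleton.1 hj]; exact hvk) i hiM
  have hPv0 : c.P v i = 0 := by
    have := hLCA v hvfeas M hcard ⟨i, hiM, by rw [hvi]; exact hi.ne'⟩ i hiM
    rw [hpv0, zero_mul] at this; exact this
  set s : ℝ := x i / 2 with hs
  have hs0 : 0 < s := by positivity
  have hsx : s < x i := by rw [hs]; linarith
  -- the jump lemma
  have jump : ∀ w : N → ℝ, Feasible w → w i = x i → c.P w i = 0 →
      c.P (Function.update w i s) i = 1 := by
    intro w hw hwi hw0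
    set ws := Function.update w i s with hws
    have hwsf : Feasible ws := by
      refine ⟨fun j => ?_, i, by rw [hws, Function.update_self]; exact hs0.ne'⟩
      rcases Decidable.eq_or_ne j i with rfl | hji
      · rw [hws, Function.update_self]; exact hs0.le
      · rw [hws, Function.update_of_ne hji]; exact hw.1 j
    rcases lt_or_eq_of_le (P_le_one hN c hwsf i) with hlt | heq
    · exfalso
      have := hSM ws hwsf i hlt (x i) (by rw [hws, Function.update_self]; exact hsx)
      have hup : Function.update ws i (x i) = w := by
        rw [hws, Function.update_idem, ← hwi, Function.update_eq_self]
      rw [hup, hw0] at this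
      exact absurd this (not_lt.2 (P_nonneg hN c hwsf i))
    · exact heq
  have hxs1 : c.P (Function.update x i s) i = 1 := jump x hx rfl hP0
  have hvs1 : c.P (Function.update v i s) i = 1 := jump v hvfeas hvi hPv0
  -- feasibility of updates
  have husf : Feasible (Function.update x i s) := by
    refine ⟨fun j => ?_, i, by rw [Function.update_self]; exact hs0.ne'⟩
    rcases Decidable.eq_or_ne j i with rfl | hji
    · rw [Function.update_self]; exact hs0.le
    · rw [Function.update_of_ne hji]; exact hx.1 j
  have hvsf : Feasible (Function.update v i s) := by
    refine ⟨fun j => ?_, i, by rw [Function.update_self]; exact hs0.ne'⟩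
    rcases Decidable.eq_or_ne j i with rfl | hji
    · rw [Function.update_self]; exact hs0.le
    · rw [Function.update_of_ne hji]; exact hvfeas.1 j
  -- m gets zero at both updated points
  have zero_of_one : ∀ w : N → ℝ, Feasible w → c.P w i = 1 → c.P w m = 0 := by
    intro w hw h1
    have hsum := P_sum hN c hw
    have hsub : ({m, i} : Finset N) ⊆ Finset.univ := subset_univ _
    have hle : c.P w m + c.P w i ≤ ∑ j, c.P w j := by
      rw [← Finset.sum_pair hmi]
      exact Finset.sum_le_sum_of_subset_of_nonneg hsub
        (fun j _ _ => P_nonneg hN c hw j)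
    rw [hsum, h1] at hle
    exact le_antisymm (by linarith) (P_nonneg hN c hw m)
  have hum0 : c.P (Function.update x i s) m = 0 := zero_of_one _ husf hxs1
  have hvm0 : c.P (Function.update v i s) m = 0 := zero_of_one _ hvsf hvs1
  -- SM on m at update x i s
  have hSMm := hSM (Function.update x i s) husf m (by rw [hum0]; norm_num)
    (x m + 1) (by rw [Function.update_of_ne hmi]; linarith)
  have hcomm : Function.update (Function.update x i s) m (x m + 1)
      = Function.update v i s := by
    rw [hv, Function.update_comm hmi.symm]
  rw [hum0, hcomm, hvm0] at hSMm
  exact lt_irrefl _ hSMm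

lemma P_lt_one (hSM : c.SM) (hLCA : c.LCA) {x : N → ℝ} (hx : Feasible x)
    {i j : N} (hij : j ≠ i) (hj : 0 < x j) : c.P x i < 1 := by
  have hPj := Ppos hN c hSM hLCA hx hj
  have hle : c.P x i + c.P x j ≤ ∑ k, c.P x k := by
    rw [← Finset.sum_pair (fun h => hij (h.symm))]
    exact Finset.sum_le_sum_of_subset_of_nonneg (subset_univ _)
      (fun k _ _ => P_nonneg hN c hx k)
  rw [P_sum hN c hx] at hle
  linarith



def allOne (N : Type*) : N → ℝ := fun _ => 1

/-- The latent "impact function" recovered from the CSF. -/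
noncomputable def refF (c : CSF N) (i : N) (t : ℝ) : ℝ :=
  c.P (Function.update (allOne N) i t) i * (1 - c.P (allOne N) i) /
    (1 - c.P (Function.update (allOne N) i t) i)



lemma feas_allOne : Feasible (allOne N) := by
  have : Nonempty N := Fintype.card_pos_iff.1 (by omega)
  exact ⟨fun _ => zero_le_one, ⟨Classical.arbitrary N, one_ne_zero⟩⟩

lemma feas_upd {t : ℝ} (ht : 0 ≤ t) (i : N) : Feasible (Function.update (allOne N) i t) := by
  obtain ⟨m, hmi, -⟩ := exists_third hN i i
  refine ⟨fun j => ?_, m, ?_⟩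
  · rcases Decidable.eq_or_ne j i with rfl | hji
    · rw [Function.update_self]; exact ht
    · rw [Function.update_of_ne hji]; exact zero_le_one
  · rw [Function.update_of_ne hmi]; exact one_ne_zero

lemma one_sub_pos (hSM : c.SM) (hLCA : c.LCA) {x : N → ℝ} (hx : Feasible x)
    {i j : N} (hij : j ≠ i) (hj : x j = 1) : 0 < 1 - c.P x i := by
  have := P_lt_one hN c hSM hLCA hx hij (by rw [hj]; norm_num)
  linarith

lemma refF_pos (hSM : c.SM) (hLCA : c.LCA) {i : N} {t : ℝ} (ht : 0 < t) :
    0 < refF c i t := by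
  obtain ⟨m, hmi, -⟩ := exists_third hN i i
  have hw := feas_upd hN ht.le i
  have h1 : 0 < c.P (Function.update (allOne N) i t) i :=
    Ppos hN c hSM hLCA hw (by rw [Function.update_self]; exact ht)
  have h2 := one_sub_pos hN c hSM hLCA (feas_allOne hN) hmi rfl
  have h3 := one_sub_pos hN c hSM hLCA hw hmi (Function.update_of_ne hmi _ _)
  exact div_pos (mul_pos h1 h2) h3

lemma refF_nonneg (hSM : c.SM) (hLCA : c.LCA) {i : N} {t : ℝ} (ht : 0 ≤ t) :
    0 ≤ refF c i t := by
  obtain ⟨m, hmi, -⟩ := exists_third hN i i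
  have hw := feas_upd hN ht i
  have h1 : 0 ≤ c.P (Function.update (allOne N) i t) i := P_nonneg hN c hw i
  have h2 := one_sub_pos hN c hSM hLCA (feas_allOne hN) hmi rfl
  have h3 := one_sub_pos hN c hSM hLCA hw hmi (Function.update_of_ne hmi _ _)
  exact div_nonneg (mul_nonneg h1 h2.le) h3.le

/-- Key identity at single-update points. -/
lemma refF_mul (hSM : c.SM) (hLCA : c.LCA) {i m : N} (hmi : m ≠ i) {t : ℝ} (ht : 0 ≤ t) :
    refF c i t * c.P (Function.update (allOne N) i t) m
      = c.P (Function.update (allOne N) i t) i * c.P (allOne N) m := by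
  set w := Function.update (allOne N) i t with hwdef
  have hw : Feasible w := feas_upd hN ht i
  have he : Feasible (allOne N) := feas_allOne hN
  have h2 := one_sub_pos hN c hSM hLCA he hmi rfl
  have h3 := one_sub_pos hN c hSM hLCA hw hmi (Function.update_of_ne hmi _ _)
  -- the transfer identity
  have hpair : ∀ j ∈ Finset.univ.erase i,
      c.P w m * c.P (allOne N) j = c.P (allOne N) m * c.P w j := by
    intro j hj
    have hji : j ≠ i := (mem_erase.1 hj).1
    rcases Decidable.eq_or_ne j m with rfl | hjm
    · ring
    · have := claim1 hN c hLCA he hw hjm.symm (by norm_num [allOne])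
        (Function.update_of_ne hmi _ _).symm (Function.update_of_ne hji _ _).symm
      linarith [this]
  have h1 : ∑ j ∈ Finset.univ.erase i, c.P (allOne N) j = 1 - c.P (allOne N) i := by
    have := Finset.add_sum_erase Finset.univ (c.P (allOne N)) (mem_univ i)
    rw [P_sum hN c he] at this; linarith
  have h1w : ∑ j ∈ Finset.univ.erase i, c.P w j = 1 - c.P w i := by
    have := Finset.add_sum_erase Finset.univ (c.P w) (mem_univ i)
    rw [P_sum hN c hw] at this; linarith
  have hid : c.P w m * (1 - c.P (allOne N) i) = c.P (allOne N) m * (1 - c.P w i) := by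
    rw [← h1, ← h1w, Finset.mul_sum, Finset.mul_sum]
    exact Finset.sum_congr rfl hpair
  rw [refF, ← hwdef, div_mul_eq_mul_div, div_eq_iff h3.ne']
  linear_combination (c.P w i) * hid

/-- Pairwise key formula, case `0 < x i`. -/
lemma key_pos (hSM : c.SM) (hLCA : c.LCA) {x : N → ℝ} (hx : Feasible x)
    {i j : N} (hij : i ≠ j) (hi : 0 < x i) :
    c.P x i * refF c j (x j) = c.P x j * refF c i (x i) := by
  obtain ⟨m, hmi, hmj⟩ := exists_third hN i j
  set u : N → ℝ := fun k => if k = i then x i else if k = j then x j else 1 with hu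
  have hui : u i = x i := by simp [hu]
  have huj : u j = x j := by simp [hu, hij.symm]
  have hum : u m = 1 := by simp [hu, hmi, hmj]
  have hufeas : Feasible u := by
    refine ⟨fun k => ?_, m, by rw [hum]; norm_num⟩
    rw [hu]; dsimp only
    split
    · exact hx.1 i
    · split
      · exact hx.1 j
      · norm_num
  set u1 := Function.update (allOne N) i (x i) with hu1
  set u2 := Function.update (allOne N) j (x j) with hu2
  have hu1f : Feasible u1 := feas_upd hN (hx.1 i) i
  have hu2f : Feasible u2 := feas_upd hN (hx.1 j) j
  have hu1m : c.P u1 m = c.P u1 m := rfl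
  have hPu1m : 0 < c.P u1 m :=
    Ppos hN c hSM hLCA hu1f (by rw [hu1, Function.update_of_ne hmi]; norm_num [allOne])
  have hPu2m : 0 < c.P u2 m :=
    Ppos hN c hSM hLCA hu2f (by rw [hu2, Function.update_of_ne hmj]; norm_num [allOne])
  have hPum : 0 < c.P u m := Ppos hN c hSM hLCA hufeas (by rw [hum]; norm_num)
  have hPem : 0 < c.P (allOne N) m :=
    Ppos hN c hSM hLCA (feas_allOne hN) (by norm_num [allOne])
  -- (A)
  have hc1A := claim1 hN c hLCA hufeas hu1f (fun h => hmi h.symm) (by rw [hui]; exact hi)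
    (by rw [hui, hu1, Function.update_self])
    (by rw [hum, hu1, Function.update_of_ne hmi]; rfl)
  have hLDA := refF_mul hN c hSM hLCA hmi (hx.1 i)
  rw [← hu1] at hLDA
  have hA : c.P u i * c.P (allOne N) m = c.P u m * refF c i (x i) := by
    have h' : (c.P u i * c.P (allOne N) m) * c.P u1 m
        = (c.P u m * refF c i (x i)) * c.P u1 m := by
      linear_combination (c.P (allOne N) m) * hc1A - (c.P u m) * hLDA
    exact mul_right_cancel₀ hPu1m.ne' h' 
  -- (B)
  have hc1B := claim1 hN c hLCA hufeas hu2f (fun h => hmj h) (by rw [hum]; norm_num)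
    (by rw [hum, hu2, Function.update_of_ne hmj]; rfl)
    (by rw [huj, hu2, Function.update_self])
  have hLDB := refF_mul hN c hSM hLCA hmj (hx.1 j)
  rw [← hu2] at hLDB
  have hB : c.P u j * c.P (allOne N) m = c.P u m * refF c j (x j) := by
    have h' : (c.P u j * c.P (allOne N) m) * c.P u2 m
        = (c.P u m * refF c j (x j)) * c.P u2 m := by
      linear_combination (-(c.P (allOne N) m)) * hc1B - (c.P u m) * hLDB
    exact mul_right_cancel₀ hPu2m.ne' h' 
  -- transfer from x to u
  have hc1 := claim1 hN c hLCA hx hufeas hij hi hui.symm huj.symm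
  have h' : (c.P x i * refF c j (x j)) * c.P u m
      = (c.P x j * refF c i (x i)) * c.P u m := by
    linear_combination (c.P (allOne N) m) * hc1 - (c.P x i) * hB + (c.P x j) * hA
  exact mul_right_cancel₀ hPum.ne' h' 

/-- Pairwise key formula, general. -/
lemma key (hSM : c.SM) (hLCA : c.LCA) {x : N → ℝ} (hx : Feasible x)
    {i j : N} (hij : i ≠ j) :
    c.P x i * refF c j (x j) = c.P x j * refF c i (x i) := by
  rcases lt_or_eq_of_le (hx.1 i) with hi | hi
  · exact key_pos hN c hSM hLCA hx hij hi
  rcases lt_or_eq_of_le (hx.1 j) with hj | hj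
  · exact (key_pos hN c hSM hLCA hx hij.symm hj).symm
  obtain ⟨k, hk⟩ := hx.2
  have hk0 : 0 < x k := lt_of_le_of_ne (hx.1 k) (Ne.symm hk)
  have hki : k ≠ i := fun h => by rw [h, ← hi] at hk0; exact lt_irrefl _ hk0
  have hkj : k ≠ j := fun h => by rw [h, ← hj] at hk0; exact lt_irrefl _ hk0
  have e1 := key_pos hN c hSM hLCA hx hki hk0
  have e2 := key_pos hN c hSM hLCA hx hkj hk0
  have hfk : 0 < refF c k (x k) := refF_pos hN c hSM hLCA hk0
  have h' : (c.P x i * refF c j (x j)) * refF c k (x k)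
      = (c.P x j * refF c i (x i)) * refF c k (x k) := by
    simp only [← hi, ← hj] at e1 e2 ⊢
    linear_combination (-(refF c j 0)) * e1 + (refF c i 0) * e2
  exact mul_right_cancel₀ hfk.ne' h' 

/-- The representation: `P x i * T x = refF i (x i)`. -/
lemma P_mul_T (hSM : c.SM) (hLCA : c.LCA) {x : N → ℝ} (hx : Feasible x) (i : N) :
    c.P x i * (∑ j, refF c j (x j)) = refF c i (x i) := by
  rw [Finset.mul_sum]
  have : ∀ j ∈ Finset.univ, c.P x i * refF c j (x j) = c.P x j * refF c i (x i) := by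
    intro j _
    rcases Decidable.eq_or_ne i j with rfl | hij
    · rfl
    · exact key hN c hSM hLCA hx hij
  rw [Finset.sum_congr rfl this, ← Finset.sum_mul, P_sum hN c hx, one_mul]

lemma T_pos (hSM : c.SM) (hLCA : c.LCA) {x : N → ℝ} (hx : Feasible x) :
    0 < ∑ j, refF c j (x j) := by
  obtain ⟨k, hk⟩ := hx.2
  have hk0 : 0 < x k := lt_of_le_of_ne (hx.1 k) (Ne.symm hk)
  exact Finset.sum_pos' (fun j _ => refF_nonneg hN c hSM hLCA (hx.1 j))
    ⟨k, mem_univ k, refF_pos hN c hSM hLCA hk0⟩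

lemma P_eq (hSM : c.SM) (hLCA : c.LCA) {x : N → ℝ} (hx : Feasible x) (i : N) :
    c.P x i = refF c i (x i) / (∑ j, refF c j (x j)) := by
  rw [eq_div_iff (T_pos hN c hSM hLCA hx).ne']
  exact P_mul_T hN c hSM hLCA hx i

/-- Strict monotonicity of `refF`. -/
lemma refF_strictMono (hSM : c.SM) (hLCA : c.LCA) {i : N} {t t' : ℝ}
    (ht : 0 ≤ t) (htt : t < t') : refF c i t < refF c i t' := by
  obtain ⟨m, hmi, -⟩ := exists_third hN i i
  set w := Function.update (allOne N) i t with hw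
  set w' := Function.update (allOne N) i t' with hw'
  have hwf : Feasible w := feas_upd hN ht i
  have hw'f : Feasible w' := feas_upd hN (ht.trans htt.le) i
  have hlt : c.P w i < 1 :=
    P_lt_one hN c hSM hLCA hwf hmi (by rw [hw, Function.update_of_ne hmi]; norm_num [allOne])
  have hSMi := hSM w hwf i hlt t' (by rw [hw, Function.update_self]; exact htt)
  have : Function.update w i t' = w' := by rw [hw, hw', Function.update_idem]
  rw [this] at hSMi
  -- rewrite both sides with the representation
  have hTw : ∑ j, refF c j (w j) = refF c i t + ∑ j ∈ Finset.univ.erase i, refF c j 1 := by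
    rw [← Finset.add_sum_erase Finset.univ _ (mem_univ i), hw, Function.update_self]
    congr 1
    refine Finset.sum_congr rfl (fun j hj => ?_)
    rw [Function.update_of_ne (mem_erase.1 hj).1]
    rfl
  have hTw' : ∑ j, refF c j (w' j) = refF c i t' + ∑ j ∈ Finset.univ.erase i, refF c j 1 := by
    rw [← Finset.add_sum_erase Finset.univ _ (mem_univ i), hw', Function.update_self]
    congr 1
    refine Finset.sum_congr rfl (fun j hj => ?_)
    rw [Function.update_of_ne (mem_erase.1 hj).1]
    rfl
  set C := ∑ j ∈ Finset.univ.erase i, refF c j 1 with hC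
  have hCpos : 0 < C := by
    refine Finset.sum_pos' (fun j _ => refF_nonneg hN c hSM hLCA zero_le_one)
      ⟨m, mem_erase.2 ⟨hmi, mem_univ m⟩, refF_pos hN c hSM hLCA one_pos⟩
  have e1 := P_eq hN c hSM hLCA hwf i
  have e2 := P_eq hN c hSM hLCA hw'f i
  rw [hTw] at e1
  rw [hTw'] at e2
  have hwi : w i = t := by rw [hw, Function.update_self]
  have hw'i : w' i = t' := by rw [hw', Function.update_self]
  rw [e1, e2, hwi, hw'i] at hSMi
  set A := refF c i t with hA
  set B := refF c i t' with hB
  have hA0 : 0 ≤ A := refF_nonneg hN c hSM hLCA ht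
  have hB0 : 0 ≤ B := refF_nonneg hN c hSM hLCA (ht.trans htt.le)
  have hd1 : 0 < A + C := by linarith
  have hd2 : 0 < B + C := by linarith
  rw [div_lt_div_iff₀ hd1 hd2] at hSMi
  nlinarith [hSMi]

omit hN in
lemma sum_update_split (F : N → ℝ → ℝ) (x : N → ℝ) (i : N) (a : ℝ) :
    ∑ k, F k (Function.update x i a k)
      = F i a + ∑ k ∈ Finset.univ.erase i, F k (x k) := by
  rw [← Finset.add_sum_erase Finset.univ (fun k => F k (Function.update x i a k)) (mem_univ i),
    Function.update_self]
  congr 1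
  exact Finset.sum_congr rfl fun k hk => by rw [Function.update_of_ne (mem_erase.1 hk).1]

omit hN in
lemma sum_split (F : N → ℝ → ℝ) (x : N → ℝ) (i : N) :
    ∑ k, F k (x k) = F i (x i) + ∑ k ∈ Finset.univ.erase i, F k (x k) :=
  (Finset.add_sum_erase Finset.univ (fun k => F k (x k)) (mem_univ i)).symm

lemma dev_eq (hSM : c.SM) (hLCA : c.LCA) {x : N → ℝ} (hx : Feasible x)
    {i j : N} (hij : i ≠ j) (hi : 0 < x i) (hj : 0 < x j) :
    c.dev x i j = (refF c i (x i) - refF c i 0) / ∑ k, refF c k (x k) := by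
  have hji : j ≠ i := hij.symm
  have hx' : Feasible (Function.update x i 0) := by
    refine ⟨fun k => ?_, j, ?_⟩
    · rcases Decidable.eq_or_ne k i with rfl | hki
      · rw [Function.update_self]
      · rw [Function.update_of_ne hki]; exact hx.1 k
    · rw [Function.update_of_ne hji]; exact hj.ne'
  have hupdj : Function.update x i 0 j = x j := Function.update_of_ne hji _ _
  set S := ∑ k ∈ Finset.univ.erase i, refF c k (x k) with hS
  have hSpos : 0 < S := by
    refine Finset.sum_pos' (fun k _ => refF_nonneg hN c hSM hLCA (hx.1 k))
      ⟨j, mem_erase.2 ⟨hji, mem_univ j⟩, refF_pos hN c hSM hLCA hj⟩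
  have hT : ∑ k, refF c k (x k) = refF c i (x i) + S := sum_split (fun k => refF c k) x i
  have hT' : ∑ k, refF c k (Function.update x i 0 k) = refF c i 0 + S := by
    rw [sum_update_split (fun k => refF c k) x i 0]
  have hfi0 : 0 ≤ refF c i 0 := refF_nonneg hN c hSM hLCA le_rfl
  have hfj : 0 < refF c j (x j) := refF_pos hN c hSM hLCA hj
  have hTpos : 0 < refF c i (x i) + S := by
    have : 0 ≤ refF c i (x i) := refF_nonneg hN c hSM hLCA (hx.1 i)
    linarith
  have hT'pos : 0 < refF c i 0 + S := by linarith
  rw [CSF.dev, P_eq hN c hSM hLCA hx' j, P_eq hN c hSM hLCA hx j, hupdj, hT, hT']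
  rw [div_sub_div _ _ hT'pos.ne' hTpos.ne', div_div_div_eq]
  rw [div_eq_div_iff (by positivity) hTpos.ne']
  ring

lemma hre_eq (hSM : c.SM) (hLCA : c.LCA) (hHRE : c.HRE) {i j : N} (hij : i ≠ j)
    {s t l : ℝ} (hs : 0 < s) (ht : 0 < t) (hl : 0 < l) :
    (refF c i s - refF c i 0) * (refF c j (l * t) - refF c j 0)
      = (refF c i (l * s) - refF c i 0) * (refF c j t - refF c j 0) := by
  set x : N → ℝ := fun k => if k = i then s else if k = j then t else 1 with hxdef
  have hxi : x i = s := by simp [hxdef]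
  have hxj : x j = t := by simp [hxdef, hij.symm]
  have hxfeas : Feasible x := by
    refine ⟨fun k => ?_, i, by rw [hxi]; exact hs.ne'⟩
    rw [hxdef]; dsimp only
    split
    · exact hs.le
    · split
      · exact ht.le
      · norm_num
  set lx : N → ℝ := fun k => l * x k with hlxdef
  have hlxi : lx i = l * s := by rw [hlxdef]; dsimp only; rw [hxi]
  have hlxj : lx j = l * t := by rw [hlxdef]; dsimp only; rw [hxj]
  have hlxfeas : Feasible lx := by
    refine ⟨fun k => mul_nonneg hl.le (hxfeas.1 k), i, by rw [hlxi]; positivity⟩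
  have gpos : ∀ (m : N) (u : ℝ), 0 < u → 0 < refF c m u - refF c m 0 := by
    intro m u hu
    have := refF_strictMono hN c hSM hLCA (i := m) (le_refl 0) hu
    linarith
  -- positivity of the four probabilities
  have hfeas_ui : Feasible (Function.update x i 0) := by
    refine ⟨fun k => ?_, j, ?_⟩
    · rcases Decidable.eq_or_ne k i with rfl | hki
      · rw [Function.update_self]
      · rw [Function.update_of_ne hki]; exact hxfeas.1 k
    · rw [Function.update_of_ne hij.symm, hxj]; exact ht.ne'
  have hfeas_uj : Feasible (Function.update x j 0) := by
    refine ⟨fun k => ?_, i, ?_⟩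
    · rcases Decidable.eq_or_ne k j with rfl | hkj
      · rw [Function.update_self]
      · rw [Function.update_of_ne hkj]; exact hxfeas.1 k
    · rw [Function.update_of_ne hij, hxi]; exact hs.ne'
  have hfeas_lui : Feasible (Function.update lx i 0) := by
    refine ⟨fun k => ?_, j, ?_⟩
    · rcases Decidable.eq_or_ne k i with rfl | hki
      · rw [Function.update_self]
      · rw [Function.update_of_ne hki]; exact hlxfeas.1 k
    · rw [Function.update_of_ne hij.symm, hlxj]; positivity
  have hfeas_luj : Feasible (Function.update lx j 0) := by
    refine ⟨fun k => ?_, i, ?_⟩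
    · rcases Decidable.eq_or_ne k j with rfl | hkj
      · rw [Function.update_self]
      · rw [Function.update_of_ne hkj]; exact hlxfeas.1 k
    · rw [Function.update_of_ne hij, hlxi]; positivity
  have hP1 : 0 < c.P (Function.update x i 0) j :=
    Ppos hN c hSM hLCA hfeas_ui (by rw [Function.update_of_ne hij.symm, hxj]; exact ht)
  have hP2 : 0 < c.P (Function.update x j 0) i :=
    Ppos hN c hSM hLCA hfeas_uj (by rw [Function.update_of_ne hij, hxi]; exact hs)
  have hP3 : 0 < c.P (Function.update lx i 0) j :=
    Ppos hN c hSM hLCA hfeas_lui (by rw [Function.update_of_ne hij.symm, hlxj]; positivity)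
  have hP4 : 0 < c.P (Function.update lx j 0) i :=
    Ppos hN c hSM hLCA hfeas_luj (by rw [Function.update_of_ne hij, hlxi]; positivity)
  have hTx : 0 < ∑ k, refF c k (x k) := T_pos hN c hSM hLCA hxfeas
  have hTlx : 0 < ∑ k, refF c k (lx k) := T_pos hN c hSM hLCA hlxfeas
  have hd1 : c.dev x i j = (refF c i s - refF c i 0) / ∑ k, refF c k (x k) := by
    rw [dev_eq hN c hSM hLCA hxfeas hij (by rw [hxi]; exact hs) (by rw [hxj]; exact ht), hxi]
  have hd2 : c.dev x j i = (refF c j t - refF c j 0) / ∑ k, refF c k (x k) := by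
    rw [dev_eq hN c hSM hLCA hxfeas hij.symm (by rw [hxj]; exact ht) (by rw [hxi]; exact hs), hxj]
  have hd3 : c.dev lx i j = (refF c i (l * s) - refF c i 0) / ∑ k, refF c k (lx k) := by
    rw [dev_eq hN c hSM hLCA hlxfeas hij (by rw [hlxi]; positivity) (by rw [hlxj]; positivity), hlxi]
  have hd4 : c.dev lx j i = (refF c j (l * t) - refF c j 0) / ∑ k, refF c k (lx k) := by
    rw [dev_eq hN c hSM hLCA hlxfeas hij.symm (by rw [hlxj]; positivity) (by rw [hlxi]; positivity), hlxj]
  have hdev2ne : c.dev x j i ≠ 0 := by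
    rw [hd2]; exact (div_pos (gpos j t ht) hTx).ne'
  have hdev4ne : c.dev lx j i ≠ 0 := by
    rw [hd4]; exact (div_pos (gpos j (l * t) (by positivity)) hTlx).ne'
  have key := hHRE x hxfeas i j hij (by rw [hxi]; exact hs) (by rw [hxj]; exact ht)
    l hl hP1 hP2 hP3 hP4 hdev2ne hdev4ne
  rw [hd1, hd2, hd3, hd4] at key
  have cancel : ∀ (A B T : ℝ), T ≠ 0 → (A / T) / (B / T) = A / B := by
    intro A B T hT
    rcases Decidable.eq_or_ne B 0 with rfl | hB
    · simp
    · field_simp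
  rw [cancel _ _ _ hTx.ne', cancel _ _ _ hTlx.ne'] at key
  exact (div_eq_div_iff (gpos j t ht).ne' (gpos j (l*t) (by positivity)).ne').1 key

/-- Forward direction. -/
lemma forward (hSM : c.SM) (hLCA : c.LCA) (hHRE : c.HRE) :
    ∃ (r : ℝ) (a b : N → ℝ), 0 < r ∧ (∀ j, 0 < a j) ∧ (∀ j, 0 ≤ b j) ∧
      ∀ M : Finset N, 2 ≤ M.card → ∀ x, FeasibleOn M x → ∀ i ∈ M,
        c.p M x i = (b i + a i * x i ^ r) / ∑ j ∈ M, (b j + a j * x j ^ r) := by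
  have hne : Nonempty N := Fintype.card_pos_iff.1 (by omega)
  set i0 : N := Classical.arbitrary N with hi0
  obtain ⟨j0, hj0, -⟩ := exists_third hN i0 i0
  have gpos : ∀ (m : N) (u : ℝ), 0 < u → 0 < refF c m u - refF c m 0 := by
    intro m u hu
    have := refF_strictMono hN c hSM hLCA (i := m) (le_refl 0) hu
    linarith
  set hfun : ℝ → ℝ := fun l => (refF c i0 l - refF c i0 0) / (refF c i0 1 - refF c i0 0)
    with hfundef
  have hg1 : 0 < refF c i0 1 - refF c i0 0 := gpos i0 1 one_pos
  have scale0 : ∀ m : N, m ≠ i0 → ∀ t l : ℝ, 0 < t → 0 < l →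
      refF c m (l * t) - refF c m 0 = hfun l * (refF c m t - refF c m 0) := by
    intro m hm t l ht hl
    have h := hre_eq hN c hSM hLCA hHRE (Ne.symm hm) one_pos ht hl
    rw [mul_one] at h
    rw [hfundef]
    rw [div_mul_eq_mul_div, eq_div_iff hg1.ne']
    linear_combination h
  have scale : ∀ (m : N) (t l : ℝ), 0 < t → 0 < l →
      refF c m (l * t) - refF c m 0 = hfun l * (refF c m t - refF c m 0) := by
    intro m t l ht hl
    rcases Decidable.eq_or_ne m i0 with rfl | hm
    · have h := hre_eq hN c hSM hLCA hHRE hj0 one_pos ht hl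
      rw [mul_one] at h
      have h2 := scale0 j0 hj0 1 l one_pos hl
      rw [mul_one] at h2
      have hgj : 0 < refF c j0 1 - refF c j0 0 := gpos j0 1 one_pos
      refine mul_left_cancel₀ hgj.ne'
        (b := refF c i0 (l * t) - refF c i0 0)
        (c := hfun l * (refF c i0 t - refF c i0 0)) ?_
      linear_combination h + (refF c i0 t - refF c i0 0) * h2
    · exact scale0 m hm t l ht hl
  have hfunpos : ∀ l : ℝ, 0 < l → 0 < hfun l := fun l hl =>
    div_pos (gpos i0 l hl) hg1
  have hfunmul : ∀ p q : ℝ, 0 < p → 0 < q → hfun (p * q) = hfun p * hfun q := by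
    intro p q hp hq
    have h1 := scale i0 q p hq hp
    have h2 := scale i0 1 q one_pos hq
    rw [mul_one] at h2
    have e : ∀ l : ℝ, hfun l * (refF c i0 1 - refF c i0 0) = refF c i0 l - refF c i0 0 := by
      intro l
      rw [hfundef]
      dsimp only
      exact div_mul_cancel₀ _ hg1.ne'
    refine mul_right_cancel₀ hg1.ne' ?_
    rw [e (p * q)]
    calc refF c i0 (p * q) - refF c i0 0 = hfun p * (refF c i0 q - refF c i0 0) := h1
      _ = hfun p * (hfun q * (refF c i0 1 - refF c i0 0)) := by rw [h2]
      _ = hfun p * hfun q * (refF c i0 1 - refF c i0 0) := by ring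
  have hfunmono : ∀ p q : ℝ, 0 < p → p < q → hfun p < hfun q := by
    intro p q hp hpq
    have h := refF_strictMono hN c hSM hLCA hp.le hpq (i := i0)
    rw [hfundef]
    dsimp only
    rw [div_lt_div_iff₀ hg1 hg1]
    nlinarith [hg1, h]
  obtain ⟨r, hr, hpow⟩ := power_of_mono_mul hfun hfunpos hfunmul hfunmono
  set a : N → ℝ := fun m => refF c m 1 - refF c m 0 with hadef
  set b : N → ℝ := fun m => refF c m 0 with hbdef
  have ha : ∀ m, 0 < a m := fun m => gpos m 1 one_pos
  have hb : ∀ m, 0 ≤ b m := fun m => show 0 ≤ refF c m 0 from refF_nonneg hN c hSM hLCA le_rfl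
  have hform : ∀ (m : N) (t : ℝ), 0 ≤ t → refF c m t = b m + a m * t ^ r := by
    intro m t ht
    rcases lt_or_eq_of_le ht with ht | ht
    · have h1 := scale m 1 t one_pos ht
      rw [mul_one, hpow t ht] at h1
      rw [hadef, hbdef]
      dsimp only
      linear_combination h1
    · rw [← ht, Real.zero_rpow hr.ne', hbdef]
      ring
  refine ⟨r, a, b, hr, ha, hb, ?_⟩
  intro M hM x hxM i hiM
  obtain ⟨k, hkM, hk⟩ := hxM.2
  have hx : Feasible x := ⟨hxM.1, k, hk⟩
  have hk0 : 0 < x k := lt_of_le_of_ne (hx.1 k) (Ne.symm hk)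
  have hT : 0 < ∑ j, refF c j (x j) := T_pos hN c hSM hLCA hx
  have hTM : 0 < ∑ j ∈ M, refF c j (x j) := by
    refine Finset.sum_pos' (fun j _ => refF_nonneg hN c hSM hLCA (hx.1 j))
      ⟨k, hkM, refF_pos hN c hSM hLCA hk0⟩
  have hSsum : ∑ j ∈ M, c.P x j = (∑ j ∈ M, refF c j (x j)) / ∑ j, refF c j (x j) := by
    rw [Finset.sum_div]
    exact Finset.sum_congr rfl fun j _ => P_eq hN c hSM hLCA hx j
  have hlca := hLCA x hx M hM ⟨k, hkM, hk⟩ i hiM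
  rw [hSsum, P_eq hN c hSM hLCA hx i] at hlca
  have h3 : refF c i (x i) = c.p M x i * (∑ j ∈ M, refF c j (x j)) := by
    have h := congrArg (fun z => z * (∑ j, refF c j (x j))) hlca
    rw [div_mul_cancel₀ _ hT.ne'] at h
    rw [h, mul_assoc, div_mul_cancel₀ _ hT.ne']
  have hpi : c.p M x i = refF c i (x i) / ∑ j ∈ M, refF c j (x j) := by
    rw [h3, mul_div_assoc, div_self hTM.ne', mul_one]
  rw [hpi, hform i (x i) (hx.1 i)]
  congr 1
  exact Finset.sum_congr rfl fun j hj => hform j (x j) (hx.1 j)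

/-- Backward direction. -/
lemma backward {r : ℝ} {a b : N → ℝ} (hr : 0 < r) (ha : ∀ j, 0 < a j) (hb : ∀ j, 0 ≤ b j)
    (hp : ∀ M : Finset N, 2 ≤ M.card → ∀ x, FeasibleOn M x → ∀ i ∈ M,
      c.p M x i = (b i + a i * x i ^ r) / ∑ j ∈ M, (b j + a j * x j ^ r)) :
    c.SM ∧ c.LCA ∧ c.HRE := by
  have hFnn : ∀ (x : N → ℝ) (j : N), 0 ≤ x j → 0 ≤ b j + a j * x j ^ r := by
    intro x j hx
    have := Real.rpow_nonneg hx r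
    nlinarith [hb j, (ha j).le]
  have hFpos : ∀ (x : N → ℝ) (j : N), 0 < x j → 0 < b j + a j * x j ^ r := by
    intro x j hx
    have := Real.rpow_pos_of_pos hx r
    nlinarith [hb j, ha j]
  have hPform : ∀ x : N → ℝ, Feasible x → ∀ i : N,
      c.P x i = (b i + a i * x i ^ r) / ∑ j, (b j + a j * x j ^ r) :=
    fun x hx i => hp Finset.univ (two_le_card_univ hN) x (feasibleOn_univ hx) i (mem_univ i)
  have hTpos : ∀ x : N → ℝ, Feasible x → 0 < ∑ j, (b j + a j * x j ^ r) := by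
    intro x hx
    obtain ⟨k, hk⟩ := hx.2
    exact Finset.sum_pos' (fun j _ => hFnn x j (hx.1 j))
      ⟨k, mem_univ k, hFpos x k (lt_of_le_of_ne (hx.1 k) (Ne.symm hk))⟩
  refine ⟨?_, ?_, ?_⟩
  · -- SM
    intro x hx i hPi xi' hlt
    have hxi' : 0 < xi' := lt_of_le_of_lt (hx.1 i) hlt
    set y := Function.update x i xi' with hy
    have hyfeas : Feasible y := by
      refine ⟨fun k => ?_, i, by rw [hy, Function.update_self]; exact hxi'.ne'⟩
      rcases Decidable.eq_or_ne k i with rfl | hki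
      · rw [hy, Function.update_self]; exact hxi'.le
      · rw [hy, Function.update_of_ne hki]; exact hx.1 k
    set S := ∑ k ∈ Finset.univ.erase i, (b k + a k * x k ^ r) with hSdef
    have hSnn : 0 ≤ S := Finset.sum_nonneg fun k _ => hFnn x k (hx.1 k)
    have hT : ∑ j, (b j + a j * x j ^ r) = (b i + a i * x i ^ r) + S :=
      sum_split (fun k u => b k + a k * u ^ r) x i
    have hTy : ∑ j, (b j + a j * y j ^ r) = (b i + a i * xi' ^ r) + S := by
      rw [hy]
      exact sum_update_split (fun k u => b k + a k * u ^ r) x i xi'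
    have hNi : 0 ≤ b i + a i * x i ^ r := hFnn x i (hx.1 i)
    have hNi' : 0 < b i + a i * xi' ^ r := by
      have h := hFpos y i (by rw [hy, Function.update_self]; exact hxi')
      rw [hy, Function.update_self] at h
      exact h
    have hSpos : 0 < S := by
      rcases lt_or_eq_of_le hSnn with h | h
      · exact h
      · exfalso
        rw [hPform x hx i, hT, ← h, add_zero] at hPi
        have hT0 : 0 < b i + a i * x i ^ r := by
          have := hTpos x hx
          rw [hT, ← h, add_zero] at this
          exact this
        rw [div_self hT0.ne'] at hPi
        exact lt_irrefl _ hPi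
    have hmono : a i * x i ^ r < a i * xi' ^ r :=
      mul_lt_mul_of_pos_left (Real.rpow_lt_rpow (hx.1 i) hlt hr) (ha i)
    rw [hPform x hx i, hPform y hyfeas i, hT, hTy, hy, Function.update_self]
    rw [div_lt_div_iff₀ (by linarith) (by linarith)]
    nlinarith [hb i, hNi, hNi']
  · -- LCA
    intro x hx M hM hex i hiM
    obtain ⟨k, hkM, hk⟩ := hex
    have hTM : 0 < ∑ j ∈ M, (b j + a j * x j ^ r) :=
      Finset.sum_pos' (fun j _ => hFnn x j (hx.1 j))
        ⟨k, hkM, hFpos x k (lt_of_le_of_ne (hx.1 k) (Ne.symm hk))⟩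
    have hT := hTpos x hx
    have hsum : ∑ j ∈ M, c.P x j
        = (∑ j ∈ M, (b j + a j * x j ^ r)) / ∑ j, (b j + a j * x j ^ r) := by
      rw [Finset.sum_div]
      exact Finset.sum_congr rfl fun j _ => hPform x hx j
    rw [hPform x hx i, hp M hM x ⟨hx.1, k, hkM, hk⟩ i hiM, hsum]
    field_simp
  · -- HRE
    have devcalc : ∀ z : N → ℝ, Feasible z → ∀ i j : N, i ≠ j → 0 < z i → 0 < z j →
        c.dev z i j = (a i * z i ^ r) / ∑ k, (b k + a k * z k ^ r) := by
      intro z hz i j hij hi hj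
      have hji : j ≠ i := hij.symm
      have hz' : Feasible (Function.update z i 0) := by
        refine ⟨fun k => ?_, j, ?_⟩
        · rcases Decidable.eq_or_ne k i with rfl | hki
          · rw [Function.update_self]
          · rw [Function.update_of_ne hki]; exact hz.1 k
        · rw [Function.update_of_ne hji]; exact hj.ne'
      set S := ∑ k ∈ Finset.univ.erase i, (b k + a k * z k ^ r) with hSdef
      have hSpos : 0 < S :=
        Finset.sum_pos' (fun k _ => hFnn z k (hz.1 k))
          ⟨j, mem_erase.2 ⟨hji, mem_univ j⟩, hFpos z j hj⟩
      have hT : ∑ k, (b k + a k * z k ^ r) = (b i + a i * z i ^ r) + S :=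
        sum_split (fun k u => b k + a k * u ^ r) z i
      have hT' : ∑ k, (b k + a k * (Function.update z i 0 k) ^ r) = b i + S := by
        rw [sum_update_split (fun k u => b k + a k * u ^ r) z i 0,
          Real.zero_rpow hr.ne', mul_zero, add_zero]
      have hupdj : Function.update z i 0 j = z j := Function.update_of_ne hji _ _
      have hNj : 0 < b j + a j * z j ^ r := hFpos z j hj
      have hAi : 0 < a i * z i ^ r := mul_pos (ha i) (Real.rpow_pos_of_pos hi r)
      have hTp : 0 < (b i + a i * z i ^ r) + S := by nlinarith [hb i, hAi]
      have hT'p : 0 < b i + S := by nlinarith [hb i]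
      rw [CSF.dev, hPform _ hz' j, hPform _ hz j, hupdj, hT, hT']
      rw [div_sub_div _ _ hT'p.ne' hTp.ne', div_div_div_eq]
      rw [div_eq_div_iff (by positivity) hTp.ne']
      ring
    intro x hx i j hij hxi hxj l hl _ _ _ _ _ _
    set lx : N → ℝ := fun k => l * x k with hlxdef
    have hlxfeas : Feasible lx := by
      obtain ⟨k, hk⟩ := hx.2
      exact ⟨fun m => mul_nonneg hl.le (hx.1 m), k, mul_ne_zero hl.ne' hk⟩
    have hlxi : 0 < lx i := mul_pos hl hxi
    have hlxj : 0 < lx j := mul_pos hl hxj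
    rw [devcalc x hx i j hij hxi hxj, devcalc x hx j i hij.symm hxj hxi,
      devcalc lx hlxfeas i j hij hlxi hlxj, devcalc lx hlxfeas j i hij.symm hlxj hlxi]
    have hT := hTpos x hx
    have hTl := hTpos lx hlxfeas
    have cancel : ∀ (A B T : ℝ), T ≠ 0 → (A / T) / (B / T) = A / B := by
      intro A B T hT
      rcases Decidable.eq_or_ne B 0 with rfl | hB
      · simp
      · field_simp
    rw [cancel _ _ _ hT.ne', cancel _ _ _ hTl.ne']
    have hlx : ∀ k : N, lx k = l * x k := fun k => rfl
    have hrew : ∀ k : N, 0 ≤ x k → (lx k) ^ r = l ^ r * x k ^ r := by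
      intro k hk
      rw [hlx k, Real.mul_rpow hl.le hk]
    rw [hrew i (hx.1 i), hrew j (hx.1 j)]
    have h1 : 0 < a j * x j ^ r := mul_pos (ha j) (Real.rpow_pos_of_pos hxj r)
    have h2 : 0 < l ^ r := Real.rpow_pos_of_pos hl r
    have h3 : 0 < a j * (l ^ r * x j ^ r) :=
      mul_pos (ha j) (mul_pos h2 (Real.rpow_pos_of_pos hxj r))
    rw [div_eq_div_iff h1.ne' h3.ne']
    ring

end Dev

/-- SM, LCA and HRE hold iff the CSF is the asymmetric Tullock CSF with
luck, `p_i^M(x) = (b_i + a_i x_i^r) / ∑_{j∈M} (b_j + a_j x_j^r)`. -/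
theorem statement1 {N : Type*} [Fintype N] [DecidableEq N]
    (hN : 3 ≤ Fintype.card N) (c : CSF N) :
    (c.SM ∧ c.LCA ∧ c.HRE) ↔
      ∃ (r : ℝ) (a b : N → ℝ), 0 < r ∧ (∀ j, 0 < a j) ∧ (∀ j, 0 ≤ b j) ∧
        ∀ M : Finset N, 2 ≤ M.card → ∀ x, FeasibleOn M x → ∀ i ∈ M,
          c.p M x i = (b i + a i * x i ^ r) / ∑ j ∈ M, (b j + a j * x j ^ r) := by
  constructor
  · rintro ⟨hSM, hLCA, hHRE⟩
    exact Dev.forward hN c hSM hLCA hHRE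
  · rintro ⟨r, a, b, hr, ha, hb, hp⟩
    exact Dev.backward hN c hr ha hb hp
end

section
/- A contest success function on N satisfies strict monotonicity (SM), Luce's choice axiom (LCA), and relative homogeneity (RH) if and only if there exist parameters r > 0 and a_j > 0 for each j ∈ N such that for every subset M ⊆ N with |M| ≥ 2, every i ∈ M, and every effort vector x^M ∈ ℝ_+^M \ {0}: p_i^M(x^M) = a_i x_i^r / Σ_{j∈M} a_j x_j^r. -/
open Finset

/-- A positive, multiplicative, strictly increasing function on the positive reals
is a power function with positive exponent. -/
lemma mul_mono_rpow {g : ℝ → ℝ} (hpos : ∀ t, 0 < t → 0 < g t)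
    (hmul : ∀ a b, 0 < a → 0 < b → g a * g b = g (a * b))
    (hmono : ∀ s t, 0 < s → s < t → g s < g t) :
    ∃ r : ℝ, 0 < r ∧ ∀ t, 0 < t → g t = t ^ r := by
  have g1 : g 1 = 1 := by
    have h := hmul 1 1 one_pos one_pos
    rw [mul_one] at h
    have := hpos 1 one_pos
    nlinarith
  set φ : ℝ → ℝ := fun u => Real.log (g (Real.exp u)) with hφ
  have hadd : ∀ u v, φ (u + v) = φ u + φ v := by
    intro u v
    rw [hφ]; dsimp only
    rw [Real.exp_add, ← hmul _ _ (Real.exp_pos u) (Real.exp_pos v),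
      Real.log_mul (hpos _ (Real.exp_pos u)).ne' (hpos _ (Real.exp_pos v)).ne']
  have hsmφ : StrictMono φ := by
    intro u v huv
    exact Real.log_lt_log (hpos _ (Real.exp_pos u))
      (hmono _ _ (Real.exp_pos u) (Real.exp_lt_exp.2 huv))
  have h0 : φ 0 = 0 := by rw [hφ]; dsimp only; rw [Real.exp_zero, g1, Real.log_one]
  have hr : 0 < φ 1 := by
    have := hsmφ (zero_lt_one (α := ℝ))
    rwa [h0] at this
  have hnat : ∀ (n : ℕ) (u : ℝ), φ (n * u) = n * φ u := by
    intro n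
    induction n with
    | zero => intro u; simp [h0]
    | succ n ih =>
        intro u
        have hc : ((n+1:ℕ):ℝ) * u = (n:ℝ) * u + u := by push_cast; ring
        rw [hc, hadd, ih]; push_cast; ring
  have hneg : ∀ u, φ (-u) = - φ u := by
    intro u
    have := hadd u (-u)
    rw [add_neg_cancel, h0] at this
    linarith
  have hint : ∀ (m : ℤ) (u : ℝ), φ (m * u) = m * φ u := by
    intro m u
    rcases le_or_gt 0 m with h | h
    · lift m to ℕ using h
      exact_mod_cast hnat m u
    · obtain ⟨n, rfl⟩ : ∃ n : ℕ, m = -(n:ℤ) := ⟨(-m).toNat, by omega⟩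
      have hc : ((-(n:ℤ) : ℤ):ℝ) * u = -((n:ℝ) * u) := by push_cast; ring
      rw [hc, hneg, hnat]
      push_cast; ring
  have hq : ∀ q : ℚ, φ q = q * φ 1 := by
    intro q
    have hdpos : (0:ℝ) < (q.den:ℝ) := by exact_mod_cast q.pos
    have h3 : (q:ℝ) = (q.num:ℝ)/(q.den:ℝ) := by exact_mod_cast (Rat.num_div_den q).symm
    have h1 : φ ((q.den : ℝ) * (q:ℝ)) = q.den * φ q := hnat q.den (q:ℝ)
    have h2 : ((q.den:ℝ) * (q:ℝ)) = (q.num : ℝ) := by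
      rw [h3]; field_simp
    rw [h2] at h1
    have h4 : φ ((q.num:ℝ)) = q.num * φ 1 := by
      have := hint q.num 1
      simpa using this
    rw [h4] at h1
    have h5 : φ (q:ℝ) = ((q.num:ℝ) * φ 1) / (q.den:ℝ) := by
      rw [h1, mul_comm, mul_div_assoc, div_self hdpos.ne', mul_one]
    rw [h5, h3]; ring
  have hlin : ∀ u, φ u = φ 1 * u := by
    intro u
    have hle : φ u ≤ φ 1 * u := by
      by_contra hcon
      push_neg at hcon
      have hd : u < φ u / φ 1 := (lt_div_iff₀ hr).2 (by linarith)
      obtain ⟨q, hq1, hq2⟩ := exists_rat_btwn hd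
      have h5 : φ u < φ q := hsmφ hq1
      rw [hq] at h5
      have h6 : (q:ℝ) * φ 1 < φ u := by
        have := (lt_div_iff₀ hr).1 hq2
        linarith
      linarith
    have hge : φ 1 * u ≤ φ u := by
      by_contra hcon
      push_neg at hcon
      have hd : φ u / φ 1 < u := (div_lt_iff₀ hr).2 (by linarith)
      obtain ⟨q, hq1, hq2⟩ := exists_rat_btwn hd
      have h5 : φ q < φ u := hsmφ hq2
      rw [hq] at h5
      have h6 : φ u < (q:ℝ) * φ 1 := by
        have := (div_lt_iff₀ hr).1 hq1
        linarith
      linarith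
    linarith
  refine ⟨φ 1, hr, ?_⟩
  intro t ht
  have h8 : φ (Real.log t) = Real.log (g t) := by
    rw [hφ]; dsimp only; rw [Real.exp_log ht]
  have h9 : g t = Real.exp (φ 1 * Real.log t) := by
    rw [← hlin, h8, Real.exp_log (hpos t ht)]
  rw [h9, Real.rpow_def_of_pos ht]
  ring_nf

section Aux
set_option linter.unusedSectionVars false

variable {N : Type*} [Fintype N] [DecidableEq N]

lemma pos_feasible [Nonempty N] {x : N → ℝ} (hx : ∀ i, 0 < x i) : Feasible x :=
  ⟨fun i => (hx i).le, Classical.arbitrary N, (hx _).ne'⟩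

lemma feasibleOn_univ {x : N → ℝ} (hx : Feasible x) : FeasibleOn Finset.univ x :=
  ⟨hx.1, hx.2.imp fun i hi => ⟨mem_univ i, hi⟩⟩

variable (c : CSF N) (hN : 3 ≤ Fintype.card N)
include hN

lemma card_univ_two : 2 ≤ (Finset.univ : Finset N).card := by
  rw [Finset.card_univ]; exact le_trans (by norm_num) hN

lemma exists_third (i j : N) : ∃ k, k ≠ i ∧ k ≠ j := by
  by_contra h
  push_neg at h
  have hsub : (Finset.univ : Finset N) ⊆ {i, j} := by
    intro k _
    rcases Classical.em (k = i) with h1 | h1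
    · simp [h1]
    · simp [h k h1]
  have h1 := Finset.card_le_card hsub
  have h2 : ({i, j} : Finset N).card ≤ 2 :=
    le_trans (Finset.card_insert_le _ _) (by simp)
  rw [Finset.card_univ] at h1
  omega

lemma P_sum_one {x : N → ℝ} (hx : Feasible x) : ∑ i, c.P x i = 1 :=
  c.sum_eq_one Finset.univ (card_univ_two hN) x (feasibleOn_univ hx)

lemma P_nonneg {x : N → ℝ} (hx : Feasible x) (i : N) : 0 ≤ c.P x i :=
  c.nonneg Finset.univ (card_univ_two hN) x (feasibleOn_univ hx) i (mem_univ i)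

lemma P_le_one {x : N → ℝ} (hx : Feasible x) (i : N) : c.P x i ≤ 1 :=
  c.le_one Finset.univ (card_univ_two hN) x (feasibleOn_univ hx) i (mem_univ i)

/-- If `P x i = 1` then all other probabilities vanish. -/
lemma P_eq_one_other {x : N → ℝ} (hx : Feasible x) {i : N} (hi : c.P x i = 1)
    {j : N} (hj : j ≠ i) : c.P x j = 0 := by
  have hsum := P_sum_one c hN hx
  have h1 : ∑ m ∈ (Finset.univ.erase i), c.P x m + c.P x i = 1 := by
    rw [Finset.sum_erase_add _ _ (mem_univ i)]; exact hsum
  have h2 : ∑ m ∈ (Finset.univ.erase i), c.P x m = 0 := by linarith [hi ▸ h1]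
  have h3 : ∀ m ∈ Finset.univ.erase i, 0 ≤ c.P x m := fun m _ => P_nonneg c hN hx m
  have h4 : c.P x j ≤ 0 := by
    have := Finset.single_le_sum h3 (by simp [hj] : j ∈ Finset.univ.erase i)
    linarith
  linarith [P_nonneg c hN hx j]

/-- Claim C: if `P x m = 0` then reducing `m`'s effort makes its probability 1. -/
lemma claimC (hsm : c.SM) {x : N → ℝ} (hx : Feasible x) {m : N} (hPm : c.P x m = 0)
    {t : ℝ} (ht : t < x m) (hfeas : Feasible (Function.update x m t)) :
    c.P (Function.update x m t) m = 1 := by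
  by_contra h
  have hle : c.P (Function.update x m t) m ≤ 1 := P_le_one c hN hfeas m
  have hlt : c.P (Function.update x m t) m < 1 := lt_of_le_of_ne hle h
  have hlt2 : (Function.update x m t) m < x m := by rw [Function.update_self]; exact ht
  have := hsm (Function.update x m t) hfeas m hlt (x m) hlt2
  rw [Function.update_idem, Function.update_eq_self] at this
  rw [hPm] at this
  linarith [P_nonneg c hN hfeas m]


/-- Interior positivity. -/
lemma P_pos (hsm : c.SM) {x : N → ℝ} (hx : ∀ m, 0 < x m) (i : N) : 0 < c.P x i := by
  have hfeas : Feasible x := ⟨fun m => (hx m).le, i, (hx i).ne'⟩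
  rcases lt_or_eq_of_le (P_nonneg c hN hfeas i) with h | h
  · exact h
  exfalso
  have hPi : c.P x i = 0 := h.symm
  obtain ⟨j, hji⟩ : ∃ j, j ≠ i := by
    obtain ⟨k, hk1, hk2⟩ := exists_third hN i i
    exact ⟨k, hk1⟩
  -- step0 : for every t < x i (nonneg), P (update x i t) i = 1
  have hupos : ∀ t : ℝ, 0 < t → ∀ m, 0 < Function.update x i t m := by
    intro t ht m
    rcases Classical.em (m = i) with rfl | hmi
    · rw [Function.update_self]; exact ht
    · rw [Function.update_of_ne hmi]; exact hx m
  have hufeas : ∀ t : ℝ, 0 < t → Feasible (Function.update x i t) := by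
    intro t ht
    exact ⟨fun m => (hupos t ht m).le, i, by rw [Function.update_self]; exact ht.ne'⟩
  have step0 : ∀ t : ℝ, 0 < t → t < x i → c.P (Function.update x i t) i = 1 := by
    intro t ht htlt
    exact claimC c hN hsm hfeas hPi htlt (hufeas t ht)
  set w := Function.update x i (x i / 2) with hw
  set w' := Function.update x i (x i / 4) with hw'
  have hxi := hx i
  have hwfeas : Feasible w := hufeas _ (by linarith)
  have hw'feas : Feasible w' := hufeas _ (by linarith)
  have hPwi : c.P w i = 1 := step0 _ (by linarith) (by linarith)
  have hPw'i : c.P w' i = 1 := step0 _ (by linarith) (by linarith)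
  have hPwj : c.P w j = 0 := P_eq_one_other c hN hwfeas hPwi hji
  have hPw'j : c.P w' j = 0 := P_eq_one_other c hN hw'feas hPw'i hji
  have hwj : w j = x j := Function.update_of_ne hji _ _
  have hw'j : w' j = x j := Function.update_of_ne hji _ _
  have hxj := hx j
  -- v = update w j (x j / 2), v' = update w' j (x j / 2)
  set v := Function.update w j (x j / 2) with hv
  set v' := Function.update w' j (x j / 2) with hv'
  have hvpos : ∀ m, 0 < v m := by
    intro m
    rcases Classical.em (m = j) with rfl | hmj
    · rw [hv, Function.update_self]; linarith
    · rw [hv, Function.update_of_ne hmj]; exact hupos _ (by linarith) m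
  have hv'pos : ∀ m, 0 < v' m := by
    intro m
    rcases Classical.em (m = j) with rfl | hmj
    · rw [hv', Function.update_self]; linarith
    · rw [hv', Function.update_of_ne hmj]; exact hupos _ (by linarith) m
  have hvfeas : Feasible v := ⟨fun m => (hvpos m).le, j, (hvpos j).ne'⟩
  have hv'feas : Feasible v' := ⟨fun m => (hv'pos m).le, j, (hv'pos j).ne'⟩
  have hPvj : c.P v j = 1 := by
    apply claimC c hN hsm hwfeas hPwj _ hvfeas
    rw [hwj]; linarith
  have hPv'j : c.P v' j = 1 := by
    apply claimC c hN hsm hw'feas hPw'j _ hv'feas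
    rw [hw'j]; linarith
  have hPvi : c.P v i = 0 := P_eq_one_other c hN hvfeas hPvj hji.symm
  -- claimC at v for coordinate i, dropping to x i / 4, gives v'
  have hvi : v i = x i / 2 := by
    rw [hv, Function.update_of_ne hji.symm, hw, Function.update_self]
  have hkey : Function.update v i (x i / 4) = v' := by
    rw [hv, hv', hw, hw', Function.update_comm hji.symm, Function.update_idem]
    exact Function.update_comm hji _ _ _
  have hPv'i : c.P v' i = 1 := by
    rw [← hkey]
    apply claimC c hN hsm hvfeas hPvi _ (hkey ▸ hv'feas)
    rw [hvi]; linarith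
  have := P_eq_one_other c hN hv'feas hPv'i hji
  rw [hPv'j] at this
  norm_num at this

lemma P_lt_one (hsm : c.SM) {x : N → ℝ} (hx : ∀ m, 0 < x m) (i : N) : c.P x i < 1 := by
  have hfeas : Feasible x := ⟨fun m => (hx m).le, i, (hx i).ne'⟩
  obtain ⟨j, hji, _⟩ := exists_third hN i i
  have hsum := P_sum_one c hN hfeas
  have h1 : ∑ m ∈ (Finset.univ.erase i), c.P x m + c.P x i = 1 := by
    rw [Finset.sum_erase_add _ _ (mem_univ i)]; exact hsum
  have h2 : c.P x j ≤ ∑ m ∈ (Finset.univ.erase i), c.P x m :=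
    Finset.single_le_sum (fun m _ => P_nonneg c hN hfeas m) (by simp [hji])
  have := P_pos c hN hsm hx j
  linarith

/-- L1 : the ratio of winning probabilities depends only on the pair's efforts. -/
lemma pair_dep (hlca : c.LCA) {x y : N → ℝ} (hx : ∀ m, 0 < x m) (hy : ∀ m, 0 < y m)
    {i j : N} (hij : i ≠ j) (hxi : x i = y i) (hxj : x j = y j) :
    c.P x i * c.P y j = c.P y i * c.P x j := by
  have hcard : 2 ≤ ({i, j} : Finset N).card := le_of_eq (Finset.card_pair hij).symm
  have hfx : Feasible x := ⟨fun m => (hx m).le, i, (hx i).ne'⟩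
  have hfy : Feasible y := ⟨fun m => (hy m).le, i, (hy i).ne'⟩
  have hexx : ∃ m ∈ ({i, j} : Finset N), x m ≠ 0 := ⟨i, by simp, (hx i).ne'⟩
  have hexy : ∃ m ∈ ({i, j} : Finset N), y m ≠ 0 := ⟨i, by simp, (hy i).ne'⟩
  have hmi : i ∈ ({i, j} : Finset N) := by simp
  have hmj : j ∈ ({i, j} : Finset N) := by simp
  have e1 := hlca x hfx {i, j} hcard hexx i hmi
  have e2 := hlca x hfx {i, j} hcard hexx j hmj
  have e3 := hlca y hfy {i, j} hcard hexy i hmi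
  have e4 := hlca y hfy {i, j} hcard hexy j hmj
  have hag : ∀ m ∈ ({i, j} : Finset N), x m = y m := by
    intro m hm
    rcases Finset.mem_insert.mp hm with rfl | hm
    · exact hxi
    · rw [Finset.mem_singleton.mp hm]; exact hxj
  have hre := c.restrict {i, j} hcard x y ⟨hfx.1, hexx⟩ hag
  have hri : c.p {i, j} x i = c.p {i, j} y i := hre i hmi
  have hrj : c.p {i, j} x j = c.p {i, j} y j := hre j hmj
  rw [e1, e2, e3, e4, ← hri, ← hrj]
  ring


/-- The base vector: all ones except coordinate `i` set to `t`. -/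
noncomputable def base (i : N) (t : ℝ) : N → ℝ := Function.update (fun _ => (1:ℝ)) i t

omit hN in lemma base_pos {i : N} {t : ℝ} (ht : 0 < t) : ∀ m, 0 < base i t m := by
  intro m
  rcases Classical.em (m = i) with rfl | hmi
  · rw [base, Function.update_self]; exact ht
  · rw [base, Function.update_of_ne hmi]; norm_num

omit hN in lemma base_self (i : N) (t : ℝ) : base i t i = t := Function.update_self _ _ _

omit hN in lemma base_other {i m : N} (h : m ≠ i) (t : ℝ) : base i t m = 1 := Function.update_of_ne h _ _

/-- The two-contestant ratio function. -/
noncomputable def fr (c : CSF N) (i j : N) (t : ℝ) : ℝ :=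
  c.P (base i t) i / c.P (base i t) j

lemma fr_pos (hsm : c.SM) {i j : N} (hij : i ≠ j) {t : ℝ} (ht : 0 < t) :
    0 < fr c i j t :=
  div_pos (P_pos c hN hsm (base_pos ht) i) (P_pos c hN hsm (base_pos ht) j)

/-- R1 : ratio of winning probabilities as a function of the effort ratio. -/
lemma ratio_eq_fr (hsm : c.SM) (hlca : c.LCA) (hrh : c.RH)
    {x : N → ℝ} (hx : ∀ m, 0 < x m) {i j : N} (hij : i ≠ j) :
    c.P x i / c.P x j = fr c i j (x i / x j) := by
  have hfeas : Feasible x := ⟨fun m => (hx m).le, i, (hx i).ne'⟩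
  set y := fun k => (x j)⁻¹ * x k with hy
  have hypos : ∀ m, 0 < y m := fun m => mul_pos (inv_pos.2 (hx j)) (hx m)
  have hr := hrh x hfeas i j (hx i) (hx j) (x j)⁻¹ (inv_pos.2 (hx j))
  have hb : 0 < x i / x j := div_pos (hx i) (hx j)
  have hbpos := base_pos (i := i) hb
  have hyi : y i = x i / x j := by rw [hy]; exact inv_mul_eq_div _ _
  have hyj : y j = 1 := by rw [hy]; exact inv_mul_cancel₀ (hx j).ne'
  have hpd := pair_dep c hN hlca hypos hbpos hij
    (by rw [hyi, base_self]) (by rw [hyj, base_other hij.symm])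
  have h1 : c.P y i / c.P y j = c.P (base i (x i / x j)) i / c.P (base i (x i / x j)) j := by
    rw [div_eq_div_iff (P_pos c hN hsm hypos j).ne' (P_pos c hN hsm hbpos j).ne']
    linarith [hpd]
  rw [hr, h1]; rfl

/-- The cocycle identity. -/
lemma fr_mul (hsm : c.SM) (hlca : c.LCA) (hrh : c.RH)
    {i j k : N} (hij : i ≠ j) (hjk : j ≠ k) (hik : i ≠ k)
    {a b : ℝ} (ha : 0 < a) (hb : 0 < b) :
    fr c i j a * fr c j k b = fr c i k (a * b) := by
  set x : N → ℝ := fun m => if m = i then a * b else if m = j then b else 1 with hxdef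
  have hx : ∀ m, 0 < x m := by
    intro m
    rw [hxdef]
    dsimp only
    split
    · exact mul_pos ha hb
    · split
      · exact hb
      · norm_num
  have hxi : x i = a * b := by rw [hxdef]; simp
  have hxj : x j = b := by rw [hxdef]; simp [hij.symm]
  have hxk : x k = 1 := by rw [hxdef]; simp [hik.symm, hjk.symm]
  have r1 := ratio_eq_fr c hN hsm hlca hrh hx hij
  have r2 := ratio_eq_fr c hN hsm hlca hrh hx hjk
  have r3 := ratio_eq_fr c hN hsm hlca hrh hx hik
  have e1 : x i / x j = a := by rw [hxi, hxj]; field_simp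
  have e2 : x j / x k = b := by rw [hxj, hxk]; norm_num
  have e3 : x i / x k = a * b := by rw [hxi, hxk]; norm_num
  rw [e1] at r1; rw [e2] at r2; rw [e3] at r3
  rw [← r1, ← r2, ← r3]
  rw [div_mul_div_comm]
  rw [div_eq_div_iff (mul_pos (P_pos c hN hsm hx j) (P_pos c hN hsm hx k)).ne'
    (P_pos c hN hsm hx k).ne']
  ring

/-- Inversion identity. -/
lemma fr_inv (hsm : c.SM) (hlca : c.LCA) (hrh : c.RH)
    {i j : N} (hij : i ≠ j) {t : ℝ} (ht : 0 < t) :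
    fr c i j t * fr c j i t⁻¹ = 1 := by
  set x := base i t with hx
  have hxpos := base_pos (i := i) ht
  have r1 := ratio_eq_fr c hN hsm hlca hrh hxpos hij
  have r2 := ratio_eq_fr c hN hsm hlca hrh hxpos hij.symm
  have e1 : x i / x j = t := by rw [hx, base_self, base_other hij.symm]; norm_num
  have e2 : x j / x i = t⁻¹ := by rw [hx, base_self, base_other hij.symm]; norm_num
  rw [e1] at r1; rw [e2] at r2
  rw [← r1, ← r2, div_mul_div_comm, mul_comm]
  exact div_self (mul_pos (P_pos c hN hsm hxpos j) (P_pos c hN hsm hxpos i)).ne'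

/-- Strict monotonicity of the ratio function. -/
lemma fr_mono (hsm : c.SM) (hlca : c.LCA) (hrh : c.RH)
    {i j : N} (hij : i ≠ j) {s s' : ℝ} (hs : 0 < s) (hss : s < s') :
    fr c i j s < fr c i j s' := by
  set x := base i s with hxd
  set x' := base i s' with hxd'
  have hxpos := base_pos (i := i) hs
  have hx'pos := base_pos (i := i) (lt_trans hs hss)
  have hfeas : Feasible x := ⟨fun m => (hxpos m).le, i, (hxpos i).ne'⟩
  have hx'feas : Feasible x' := ⟨fun m => (hx'pos m).le, i, (hx'pos i).ne'⟩
  have hupd : Function.update x i s' = x' := by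
    rw [hxd, hxd', base, base, Function.update_idem]
  have h1 : c.P x i < c.P x' i := by
    have := hsm x hfeas i (P_lt_one c hN hsm hxpos i) s'
      (by rw [hxd, base_self]; exact hss)
    rwa [hupd] at this
  set A := 1 - c.P x i with hA
  set A' := 1 - c.P x' i with hA'
  have hApos : 0 < A := by have := P_lt_one c hN hsm hxpos i; rw [hA]; linarith
  have hA'pos : 0 < A' := by have := P_lt_one c hN hsm hx'pos i; rw [hA']; linarith
  have hAA : A' < A := by rw [hA, hA']; linarith
  have hsumA : ∑ m ∈ Finset.univ.erase i, c.P x m = A := by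
    have := P_sum_one c hN hfeas
    have h2 : ∑ m ∈ (Finset.univ.erase i), c.P x m + c.P x i = 1 := by
      rw [Finset.sum_erase_add _ _ (mem_univ i)]; exact this
    rw [hA]; linarith
  have hsumA' : ∑ m ∈ Finset.univ.erase i, c.P x' m = A' := by
    have := P_sum_one c hN hx'feas
    have h2 : ∑ m ∈ (Finset.univ.erase i), c.P x' m + c.P x' i = 1 := by
      rw [Finset.sum_erase_add _ _ (mem_univ i)]; exact this
    rw [hA']; linarith
  -- key cross identity
  have hagree : ∀ m, m ≠ i → x m = x' m := by
    intro m hm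
    rw [hxd, hxd', base_other hm, base_other hm]
  have key : c.P x' j * A = c.P x j * A' := by
    rw [← hsumA, ← hsumA', Finset.mul_sum, Finset.mul_sum]
    apply Finset.sum_congr rfl
    intro m hm
    have hmi : m ≠ i := (Finset.mem_erase.mp hm).1
    rcases Classical.em (m = j) with rfl | hmj
    · ring
    · have := pair_dep c hN hlca hx'pos hxpos (Ne.symm hmj : j ≠ m)
        (hagree j (fun h => hij (h ▸ rfl)) ).symm (hagree m hmi).symm
      linarith [this]
  have hPxj := P_pos c hN hsm hxpos j
  have hPx'j := P_pos c hN hsm hx'pos j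
  have h2 : c.P x' j < c.P x j := by
    have : c.P x' j * A < c.P x j * A := by
      rw [key]
      exact mul_lt_mul_of_pos_left hAA hPxj
    exact lt_of_mul_lt_mul_right this hApos.le
  have hlt : c.P x i / c.P x j < c.P x' i / c.P x' j :=
    div_lt_div₀ h1 h2.le (P_nonneg c hN hx'feas i) hPx'j
  have r1 := ratio_eq_fr c hN hsm hlca hrh hxpos hij
  have r2 := ratio_eq_fr c hN hsm hlca hrh hx'pos hij
  have e1 : x i / x j = s := by rw [hxd, base_self, base_other hij.symm]; norm_num
  have e2 : x' i / x' j = s' := by rw [hxd', base_self, base_other hij.symm]; norm_num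
  rw [e1] at r1; rw [e2] at r2
  rw [← r1, ← r2]
  exact hlt


lemma fr_mulpair (hsm : c.SM) (hlca : c.LCA) (hrh : c.RH)
    {i j : N} (hij : i ≠ j) {a b : ℝ} (ha : 0 < a) (hb : 0 < b) :
    fr c i j a * fr c i j b = fr c i j 1 * fr c i j (a * b) := by
  obtain ⟨k, hki, hkj⟩ := exists_third hN i j
  have hjk : j ≠ k := hkj.symm
  have hik : i ≠ k := hki.symm
  have E1 := fr_mul c hN hsm hlca hrh hij hjk hik ha hb
  have E2 : ∀ t : ℝ, 0 < t → fr c i j t * fr c j k 1 = fr c i k t := by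
    intro t ht
    have := fr_mul c hN hsm hlca hrh hij hjk hik ht one_pos
    rwa [mul_one] at this
  have E3 : ∀ t : ℝ, 0 < t → fr c i j 1 * fr c j k t = fr c i k t := by
    intro t ht
    have := fr_mul c hN hsm hlca hrh hij hjk hik one_pos ht
    rwa [one_mul] at this
  have h1 : fr c i j 1 * fr c j k b = fr c i j b * fr c j k 1 :=
    (E3 b hb).trans (E2 b hb).symm
  have h2 : fr c i j a * fr c j k b = fr c i j (a*b) * fr c j k 1 :=
    E1.trans (E2 _ (mul_pos ha hb)).symm
  have hjk1 : 0 < fr c j k 1 := fr_pos c hN hsm hjk one_pos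
  apply mul_right_cancel₀ hjk1.ne'
  calc fr c i j a * fr c i j b * fr c j k 1
      = fr c i j a * (fr c i j b * fr c j k 1) := by ring
    _ = fr c i j a * (fr c i j 1 * fr c j k b) := by rw [← h1]
    _ = fr c i j 1 * (fr c i j a * fr c j k b) := by ring
    _ = fr c i j 1 * (fr c i j (a*b) * fr c j k 1) := by rw [h2]
    _ = fr c i j 1 * fr c i j (a * b) * fr c j k 1 := by ring

/-- The interior Tullock formula. -/
lemma exists_tullock_interior (hsm : c.SM) (hlca : c.LCA) (hrh : c.RH) :
    ∃ (r : ℝ) (A : N → ℝ), 0 < r ∧ (∀ j, 0 < A j) ∧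
      ∀ x : N → ℝ, (∀ m, 0 < x m) → ∀ i,
        c.P x i = A i * x i ^ r / ∑ j, A j * x j ^ r := by
  have hne : Nonempty N := Fintype.card_pos_iff.mp (by omega)
  set i0 := Classical.arbitrary N with hi0def
  obtain ⟨j0, hj0, -⟩ := exists_third hN i0 i0
  have hi0j0 : i0 ≠ j0 := hj0.symm
  have hg1pos : 0 < fr c i0 j0 1 := fr_pos c hN hsm hi0j0 one_pos
  obtain ⟨r, hr, hgr⟩ := mul_mono_rpow (g := fun t => fr c i0 j0 t / fr c i0 j0 1)
    (fun t ht => div_pos (fr_pos c hN hsm hi0j0 ht) hg1pos)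
    (by
      intro a b ha hb
      rw [div_mul_div_comm, fr_mulpair c hN hsm hlca hrh hi0j0 ha hb,
        mul_div_mul_left _ _ hg1pos.ne'])
    (by
      intro s t hs hst
      exact div_lt_div_of_pos_right (fr_mono c hN hsm hlca hrh hi0j0 hs hst) hg1pos)
  have hPow0 : ∀ t : ℝ, 0 < t → fr c i0 j0 t = fr c i0 j0 1 * t ^ r := by
    intro t ht
    have := hgr t ht
    rw [div_eq_iff hg1pos.ne'] at this
    rw [this]; ring
  have powStep : ∀ i j k : N, i ≠ j → j ≠ k → i ≠ k →
      (∀ t : ℝ, 0 < t → fr c i j t = fr c i j 1 * t ^ r) →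
      (∀ t : ℝ, 0 < t → fr c i k t = fr c i k 1 * t ^ r) := by
    intro i j k hij hjk hik hp t ht
    have e2 : fr c i j t * fr c j k 1 = fr c i k t := by
      have := fr_mul c hN hsm hlca hrh hij hjk hik ht one_pos
      rwa [mul_one] at this
    have e2' : fr c i j 1 * fr c j k 1 = fr c i k 1 := by
      have := fr_mul c hN hsm hlca hrh hij hjk hik one_pos one_pos
      rwa [mul_one] at this
    rw [← e2, ← e2', hp t ht]; ring
  have powSymm : ∀ i j : N, i ≠ j →
      (∀ t : ℝ, 0 < t → fr c i j t = fr c i j 1 * t ^ r) →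
      (∀ t : ℝ, 0 < t → fr c j i t = fr c j i 1 * t ^ r) := by
    intro i j hij hp t ht
    have hi1 := fr_inv c hN hsm hlca hrh hij (inv_pos.2 ht)
    rw [inv_inv] at hi1
    have hi2 := fr_inv c hN hsm hlca hrh hij one_pos
    rw [inv_one] at hi2
    rw [hp t⁻¹ (inv_pos.2 ht)] at hi1
    rw [hp 1 one_pos, Real.one_rpow, mul_one] at hi2
    have h2 := eq_inv_of_mul_eq_one_right hi1
    have h3 := eq_inv_of_mul_eq_one_right hi2
    rw [h2, h3, Real.inv_rpow ht.le r, mul_inv, inv_inv]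
  have powAll : ∀ i j : N, i ≠ j → ∀ t : ℝ, 0 < t → fr c i j t = fr c i j 1 * t ^ r := by
    intro i j hij
    by_cases hii0 : i = i0
    · by_cases hjj0 : j = j0
      · rw [hii0, hjj0]; exact hPow0
      · rw [hii0]
        exact powStep i0 j0 j hi0j0 (fun h => hjj0 h.symm) (hii0 ▸ hij) hPow0
    · have p1 : ∀ t : ℝ, 0 < t → fr c i0 i t = fr c i0 i 1 * t ^ r := by
        by_cases hij0 : i = j0
        · rw [hij0]; exact hPow0
        · exact powStep i0 j0 i hi0j0 (fun h => hij0 h.symm) (fun h => hii0 h.symm) hPow0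
      have p2 := powSymm i0 i (fun h => hii0 h.symm) p1
      by_cases hji0 : j = i0
      · rw [hji0]; exact p2
      · exact powStep i i0 j hii0 (fun h => hji0 h.symm) hij p2
  set A : N → ℝ := fun i => if i = i0 then 1 else fr c i i0 1 with hA
  have hApos : ∀ i, 0 < A i := by
    intro i
    rw [hA]; dsimp only
    split
    · norm_num
    · next h => exact fr_pos c hN hsm h one_pos
  have hAi0 : A i0 = 1 := by rw [hA]; simp
  have frEq : ∀ i j : N, i ≠ j → ∀ t : ℝ, 0 < t →
      fr c i j t = (A i / A j) * t ^ r := by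
    intro i j hij t ht
    by_cases hji0 : j = i0
    · have hii0 : i ≠ i0 := fun h => hij (h.trans hji0.symm)
      have hAi' : A i = fr c i i0 1 := by rw [hA]; simp [hii0]
      rw [powAll i j hij t ht, hji0, ← hAi', hAi0, div_one]
    · by_cases hii0 : i = i0
      · have hji0' : j ≠ i0 := hji0
        have hinv := fr_inv c hN hsm hlca hrh hji0' one_pos
        rw [inv_one] at hinv
        have hAj : A j = fr c j i0 1 := by rw [hA]; simp [hji0]
        have h1 : fr c i0 j 1 = (A j)⁻¹ := by rw [hAj]; exact eq_inv_of_mul_eq_one_right hinv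
        rw [hii0, powAll i0 j (hii0 ▸ hij) t ht, h1, hAi0]; ring
      · have e := fr_mul c hN hsm hlca hrh hij hji0 hii0 ht one_pos
        rw [mul_one] at e
        have hAi' : A i = fr c i i0 1 := by rw [hA]; simp [hii0]
        have hAj : A j = fr c j i0 1 := by rw [hA]; simp [hji0]
        have hp := powAll i i0 hii0 t ht
        have hAjpos : 0 < fr c j i0 1 := fr_pos c hN hsm hji0 one_pos
        have h5 : fr c i j t = fr c i i0 t / fr c j i0 1 := by
          rw [← e]; field_simp
        rw [h5, hp, ← hAi', ← hAj]
        ring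
  refine ⟨r, A, hr, hApos, ?_⟩
  intro x hx i
  have hfeas : Feasible x := ⟨fun m => (hx m).le, i, (hx i).ne'⟩
  have hcross : ∀ j, c.P x i * (A j * x j ^ r) = c.P x j * (A i * x i ^ r) := by
    intro j
    by_cases hij : i = j
    · subst hij; ring
    · have hrat := ratio_eq_fr c hN hsm hlca hrh hx hij
      rw [frEq i j hij _ (div_pos (hx i) (hx j))] at hrat
      have hx_div : (x i / x j) ^ r = x i ^ r / x j ^ r :=
        Real.div_rpow (hx i).le (hx j).le r
      rw [hx_div] at hrat
      have hcomb : (A i / A j) * (x i ^ r / x j ^ r) = (A i * x i ^ r)/(A j * x j ^ r) :=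
        div_mul_div_comm _ _ _ _
      rw [hcomb] at hrat
      rw [div_eq_div_iff (P_pos c hN hsm hx j).ne'
        (mul_pos (hApos j) (Real.rpow_pos_of_pos (hx j) r)).ne'] at hrat
      linarith [hrat]
  have hsum : c.P x i * (∑ j, A j * x j ^ r) = A i * x i ^ r := by
    rw [Finset.mul_sum]
    have hcongr : ∀ j ∈ Finset.univ, c.P x i * (A j * x j ^ r) = (A i * x i ^ r) * c.P x j :=
      fun j _ => by rw [hcross j]; ring
    rw [Finset.sum_congr rfl hcongr, ← Finset.mul_sum, P_sum_one c hN hfeas, mul_one]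
  have hD : 0 < ∑ j, A j * x j ^ r :=
    Finset.sum_pos (fun j _ => mul_pos (hApos j) (Real.rpow_pos_of_pos (hx j) r))
      ⟨i, mem_univ i⟩
  rw [eq_div_iff hD.ne']
  exact hsum


/-- The Tullock formula extends from the interior to all feasible vectors. -/
lemma P_formula (hsm : c.SM) (hlca : c.LCA) (r : ℝ) (A : N → ℝ) (hr : 0 < r)
    (hApos : ∀ j, 0 < A j)
    (hint : ∀ x : N → ℝ, (∀ m, 0 < x m) → ∀ i,
      c.P x i = A i * x i ^ r / ∑ j, A j * x j ^ r) :
    ∀ x, Feasible x → ∀ i, c.P x i = A i * x i ^ r / ∑ j, A j * x j ^ r := by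
  have hne : Nonempty N := Fintype.card_pos_iff.mp (by omega)
  suffices H : ∀ n : ℕ, ∀ x, Feasible x →
      (Finset.univ.filter (fun m => x m = 0)).card = n → ∀ i,
      c.P x i = A i * x i ^ r / ∑ j, A j * x j ^ r by
    intro x hx i; exact H _ x hx rfl i
  intro n
  induction n using Nat.strong_induction_on with
  | _ n IH =>
  intro x hx hcard i
  by_cases hn0 : n = 0
  · have hpos : ∀ m, 0 < x m := by
      intro m
      rcases (hx.1 m).lt_or_eq with h | h
      · exact h
      · exfalso
        have hmem : m ∈ Finset.univ.filter (fun k => x k = 0) := by simp [h.symm]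
        have hempty : Finset.univ.filter (fun k => x k = 0) = ∅ :=
          Finset.card_eq_zero.mp (by rw [hcard, hn0])
        rw [hempty] at hmem
        exact absurd hmem (Finset.notMem_empty m)
    exact hint x hpos i
  -- n ≥ 1 : first, zero coordinates get zero probability
  have hzero : ∀ m, x m = 0 → c.P x m = 0 := by
    intro m hm
    by_contra hPm
    have hd : 0 ≤ c.P x m := P_nonneg c hN hx m
    have hd1 : c.P x m ≤ 1 := P_le_one c hN hx m
    obtain ⟨j, hj⟩ := hx.2
    have hjm : j ≠ m := fun h => hj (h ▸ hm)
    have hxj : 0 < x j := (hx.1 j).lt_of_ne (Ne.symm hj)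
    rcases lt_or_eq_of_le hd1 with hlt | heq
    · -- 0 < P x m < 1 : contradiction with SM via IH
      have hδpos : 0 < c.P x m := lt_of_le_of_ne hd (Ne.symm hPm)
      set δ := c.P x m with hδ
      set C := ∑ k ∈ Finset.univ.erase m, A k * x k ^ r with hC
      have hCpos : 0 < C := by
        apply Finset.sum_pos' (fun k _ => mul_nonneg (hApos k).le (Real.rpow_nonneg (hx.1 k) r))
        exact ⟨j, by simp [hjm], mul_pos (hApos j) (Real.rpow_pos_of_pos hxj r)⟩
      set q := δ * C / (2 * A m) with hq
      have hqpos : 0 < q := div_pos (mul_pos hδpos hCpos) (mul_pos two_pos (hApos m))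
      set ε := min 1 (q ^ r⁻¹) with hε
      have hεpos : 0 < ε := lt_min one_pos (Real.rpow_pos_of_pos hqpos _)
      have hεr : A m * ε ^ r ≤ δ * C / 2 := by
        have h1 : ε ^ r ≤ (q ^ r⁻¹) ^ r :=
          Real.rpow_le_rpow hεpos.le (min_le_right _ _) hr.le
        have h2 : (q ^ r⁻¹) ^ r = q := by
          rw [← Real.rpow_mul hqpos.le, inv_mul_cancel₀ hr.ne', Real.rpow_one]
        have h3 : A m * ε ^ r ≤ A m * q :=
          mul_le_mul_of_nonneg_left (h1.trans_eq h2) (hApos m).le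
        have h4 : A m * q = δ * C / 2 := by
          rw [hq]; field_simp [(hApos m).ne']
        linarith
      set z := Function.update x m ε with hz
      have hznn : ∀ k, 0 ≤ z k := by
        intro k
        rcases Classical.em (k = m) with rfl | hkm
        · rw [hz, Function.update_self]; exact hεpos.le
        · rw [hz, Function.update_of_ne hkm]; exact hx.1 k
      have hzfeas : Feasible z := ⟨hznn, m, by rw [hz, Function.update_self]; exact hεpos.ne'⟩
      have hzcard : (Finset.univ.filter (fun k => z k = 0)).card = n - 1 := by
        have hset : Finset.univ.filter (fun k => z k = 0)
            = (Finset.univ.filter (fun k => x k = 0)).erase m := by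
          ext k
          simp only [Finset.mem_filter, Finset.mem_erase, Finset.mem_univ, true_and]
          constructor
          · intro hk
            have hkm : k ≠ m := by
              rintro rfl
              rw [hz, Function.update_self] at hk
              exact hεpos.ne' hk
            rw [hz, Function.update_of_ne hkm] at hk
            exact ⟨hkm, hk⟩
          · rintro ⟨hkm, hk⟩
            rw [hz, Function.update_of_ne hkm]
            exact hk
        rw [hset, Finset.card_erase_of_mem (by simp [hm]), hcard]
      have hIH := IH (n-1) (by omega) z hzfeas hzcard m
      have hzsum : ∑ k, A k * z k ^ r = A m * ε ^ r + C := by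
        rw [← Finset.sum_erase_add _ _ (mem_univ m)]
        have hterm : ∀ k ∈ Finset.univ.erase m, A k * z k ^ r = A k * x k ^ r := by
          intro k hk
          rw [hz, Function.update_of_ne (Finset.mem_erase.mp hk).1]
        rw [Finset.sum_congr rfl hterm, hz, Function.update_self, ← hC]
        ring
      have hPz : c.P z m = A m * ε ^ r / (A m * ε ^ r + C) := by
        rw [hIH, hzsum, hz, Function.update_self]
      have hεrpos : 0 < A m * ε ^ r := mul_pos (hApos m) (Real.rpow_pos_of_pos hεpos r)
      have hPzlt : c.P z m < δ := by
        rw [hPz, div_lt_iff₀ (by linarith)]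
        nlinarith [mul_pos hδpos hεrpos]
      have hsmres := hsm x hx m hlt ε (by rw [hm]; exact hεpos)
      rw [← hz] at hsmres
      rw [← hδ] at hsmres
      linarith
    · -- P x m = 1
      have hall : ∀ k, k ≠ m → c.P x k = 0 := fun k hk => P_eq_one_other c hN hx heq hk
      by_cases hz2 : ∃ k, k ≠ m ∧ k ≠ j ∧ x k ≠ 0
      · -- a second active contestant exists
        obtain ⟨k, hkm, hkj, hxk⟩ := hz2
        have hjk : j ≠ k := fun h => hkj h.symm
        have hxkpos : 0 < x k := (hx.1 k).lt_of_ne (Ne.symm hxk)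
        have hPj : c.P x j = 0 := hall j hjm
        set y := Function.update x j (x j / 2) with hy
        have hynn : ∀ a, 0 ≤ y a := by
          intro a
          rcases Classical.em (a = j) with rfl | haj
          · rw [hy, Function.update_self]; linarith
          · rw [hy, Function.update_of_ne haj]; exact hx.1 a
        have hyj : y j = x j / 2 := by rw [hy, Function.update_self]
        have hyfeas : Feasible y := ⟨hynn, j, by rw [hyj]; positivity⟩
        have hPyj : c.P y j = 1 := claimC c hN hsm hx hPj (by linarith) hyfeas
        have hPyk : c.P y k = 0 := P_eq_one_other c hN hyfeas hPyj hkj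
        have hcard2 : 2 ≤ ({j, k} : Finset N).card := le_of_eq (Finset.card_pair hjk).symm
        have hexy : ∃ a ∈ ({j, k} : Finset N), y a ≠ 0 :=
          ⟨j, by simp, by rw [hyj]; positivity⟩
        have hlcy := hlca y hyfeas {j, k} hcard2 hexy j (by simp)
        rw [Finset.sum_pair hjk, hPyj, hPyk] at hlcy
        have hpj : c.p {j, k} y j = 1 := by
          rw [add_zero, mul_one] at hlcy
          exact hlcy.symm
        set w : N → ℝ := fun a => if a = j then x j / 2 else if a = k then x k else 1 with hw
        have hwpos : ∀ a, 0 < w a := by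
          intro a
          rw [hw]; dsimp only
          split
          · positivity
          · split
            · exact hxkpos
            · norm_num
        have hwagree : ∀ a ∈ ({j, k} : Finset N), y a = w a := by
          intro a ha
          rcases Finset.mem_insert.mp ha with rfl | ha
          · rw [hyj, hw]; simp
          · rw [Finset.mem_singleton.mp ha, hy, Function.update_of_ne hkj, hw]
            simp [hkj]
        have hre := c.restrict {j, k} hcard2 y w ⟨hynn, hexy⟩ hwagree j (by simp)
        have hwfeas : Feasible w := pos_feasible hwpos
        have hlcw := hlca w hwfeas {j, k} hcard2 ⟨j, by simp, (hwpos j).ne'⟩ j (by simp)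
        rw [Finset.sum_pair hjk, ← hre, hpj, one_mul] at hlcw
        have := P_pos c hN hsm hwpos k
        linarith
      · -- x vanishes off {m, j}: use a one-zero comparison vector
        push_neg at hz2
        obtain ⟨k, hkm, hkj⟩ := exists_third hN m j
        have hxk : x k = 0 := hz2 k hkm hkj
        have hmj : m ≠ j := fun h => hjm h.symm
        have hn2 : 2 ≤ n := by
          rw [← hcard]
          have hsub : ({m, k} : Finset N) ⊆ Finset.univ.filter (fun a => x a = 0) := by
            intro a ha
            rcases Finset.mem_insert.mp ha with rfl | ha
            · simp [hm]
            · rw [Finset.mem_singleton.mp ha]; simp [hxk]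
          calc 2 = ({m, k} : Finset N).card := (Finset.card_pair (Ne.symm hkm)).symm
            _ ≤ _ := Finset.card_le_card hsub
        set w : N → ℝ := fun a => if a = m then 0 else if a = j then x j else 1 with hw
        have hwnn : ∀ a, 0 ≤ w a := by
          intro a
          rw [hw]; dsimp only
          split
          · exact le_refl 0
          · split
            · exact (hx.1 j)
            · norm_num
        have hwj : w j = x j := by rw [hw]; simp [hjm]
        have hwfeas : Feasible w := ⟨hwnn, j, by rw [hwj]; exact hj⟩
        have hwcard : (Finset.univ.filter (fun a => w a = 0)).card = 1 := by
          have hset : Finset.univ.filter (fun a => w a = 0) = {m} := by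
            ext a
            simp only [Finset.mem_filter, Finset.mem_univ, true_and, Finset.mem_singleton]
            constructor
            · intro ha
              by_contra ham
              rw [hw] at ha
              dsimp only at ha
              rw [if_neg ham] at ha
              rcases Classical.em (a = j) with rfl | haj
              · rw [if_pos rfl] at ha; exact hj ha
              · rw [if_neg haj] at ha; norm_num at ha
            · rintro rfl
              rw [hw]; simp
          rw [hset, Finset.card_singleton]
        have hIH := IH 1 (by omega) w hwfeas hwcard
        have hDw : 0 < ∑ a, A a * w a ^ r := by
          apply Finset.sum_pos'
            (fun a _ => mul_nonneg (hApos a).le (Real.rpow_nonneg (hwnn a) r))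
          refine ⟨j, mem_univ j, ?_⟩
          rw [hwj]
          exact mul_pos (hApos j) (Real.rpow_pos_of_pos hxj r)
        have hPwj_pos : 0 < c.P w j := by
          rw [hIH j, hwj]
          exact div_pos (mul_pos (hApos j) (Real.rpow_pos_of_pos hxj r)) hDw
        have hcard2 : 2 ≤ ({m, j} : Finset N).card := le_of_eq (Finset.card_pair hmj).symm
        have hexx : ∃ a ∈ ({m, j} : Finset N), x a ≠ 0 := ⟨j, by simp, hj⟩
        have hlcx := hlca x hx {m, j} hcard2 hexx m (by simp)
        rw [Finset.sum_pair hmj, heq, hall j hjm] at hlcx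
        have hpm : c.p {m, j} x m = 1 := by
          rw [add_zero, mul_one] at hlcx
          exact hlcx.symm
        have hagree : ∀ a ∈ ({m, j} : Finset N), x a = w a := by
          intro a ha
          rcases Finset.mem_insert.mp ha with rfl | ha
          · rw [hm, hw]; simp
          · rw [Finset.mem_singleton.mp ha, hwj]
        have hre := c.restrict {m, j} hcard2 x w ⟨hx.1, hexx⟩ hagree m (by simp)
        have hexw : ∃ a ∈ ({m, j} : Finset N), w a ≠ 0 := ⟨j, by simp, by rw [hwj]; exact hj⟩
        have hlcw := hlca w hwfeas {m, j} hcard2 hexw m (by simp)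
        rw [Finset.sum_pair hmj, ← hre, hpm, one_mul] at hlcw
        linarith
  -- Step (ii) : the formula at x
  by_cases hxi : x i = 0
  · rw [hzero i hxi, hxi, Real.zero_rpow hr.ne', mul_zero, zero_div]
  · have hxipos : 0 < x i := (hx.1 i).lt_of_ne (Ne.symm hxi)
    set S := Finset.univ.filter (fun m => x m ≠ 0) with hS
    have hiS : i ∈ S := by simp [hS, hxi]
    have hsplit := Finset.sum_filter_add_sum_filter_not Finset.univ
      (fun m => x m ≠ 0) (c.P x)
    have hzeroS : ∑ m ∈ Finset.univ.filter (fun m => ¬ x m ≠ 0), c.P x m = 0 :=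
      Finset.sum_eq_zero (fun m hm => hzero m (not_not.mp (Finset.mem_filter.mp hm).2))
    have hsumS : ∑ m ∈ S, c.P x m = 1 := by
      rw [hS]
      have := P_sum_one c hN hx
      linarith [hsplit, hzeroS]
    have hsplitA := Finset.sum_filter_add_sum_filter_not Finset.univ
      (fun m => x m ≠ 0) (fun m => A m * x m ^ r)
    have hzeroA : ∑ m ∈ Finset.univ.filter (fun m => ¬ x m ≠ 0), A m * x m ^ r = 0 :=
      Finset.sum_eq_zero (fun m hm => by
        rw [not_not.mp (Finset.mem_filter.mp hm).2, Real.zero_rpow hr.ne', mul_zero])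
    have hsumA : ∑ m ∈ S, A m * x m ^ r = ∑ m, A m * x m ^ r := by
      rw [hS]; linarith [hsplitA, hzeroA]
    by_cases hS2 : 2 ≤ S.card
    · have hex : ∃ m ∈ S, x m ≠ 0 := ⟨i, hiS, hxi⟩
      have hlcx := hlca x hx S hS2 hex i hiS
      rw [hsumS, mul_one] at hlcx
      set w : N → ℝ := fun m => if x m = 0 then 1 else x m with hw
      have hwpos : ∀ m, 0 < w m := by
        intro m
        rw [hw]; dsimp only
        split
        · norm_num
        · next hne' => exact (hx.1 m).lt_of_ne (Ne.symm hne')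
      have hagree : ∀ m ∈ S, x m = w m := by
        intro m hm
        rw [hw]; dsimp only
        rw [if_neg (Finset.mem_filter.mp hm).2]
      have hre := c.restrict S hS2 x w ⟨hx.1, hex⟩ hagree i hiS
      have hwfeas : Feasible w := pos_feasible hwpos
      have hlcw := hlca w hwfeas S hS2 ⟨i, hiS, (hwpos i).ne'⟩ i hiS
      set D := ∑ m2, A m2 * w m2 ^ r with hD
      have hDpos : 0 < D :=
        Finset.sum_pos (fun m2 _ => mul_pos (hApos m2) (Real.rpow_pos_of_pos (hwpos m2) r))
          ⟨i, mem_univ i⟩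
      have hTS : ∑ m2 ∈ S, c.P w m2 = (∑ m2 ∈ S, A m2 * w m2 ^ r) / D := by
        rw [Finset.sum_div]
        exact Finset.sum_congr rfl (fun m2 _ => hint w hwpos m2)
      have hTpos : 0 < ∑ m2 ∈ S, A m2 * w m2 ^ r :=
        Finset.sum_pos' (fun m2 _ => mul_nonneg (hApos m2).le (Real.rpow_nonneg (hwpos m2).le r))
          ⟨i, hiS, mul_pos (hApos i) (Real.rpow_pos_of_pos (hwpos i) r)⟩
      rw [hint w hwpos i, hTS] at hlcw
      have h1 := congrArg (fun z => z * D) hlcw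
      rw [div_mul_cancel₀ _ hDpos.ne', mul_assoc, div_mul_cancel₀ _ hDpos.ne'] at h1
      have hpw : c.p S w i = A i * w i ^ r / (∑ m2 ∈ S, A m2 * w m2 ^ r) := by
        rw [eq_div_iff hTpos.ne']
        linarith [h1]
      rw [hlcx, hre, hpw]
      have hwi : w i = x i := (hagree i hiS).symm
      have hterm : ∑ m2 ∈ S, A m2 * w m2 ^ r = ∑ m2 ∈ S, A m2 * x m2 ^ r :=
        Finset.sum_congr rfl (fun m2 hm2 => by rw [← hagree m2 hm2])
      rw [hwi, hterm, hsumA]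
    · have hScard : S.card = 1 := by
        have h1 : 1 ≤ S.card := Finset.card_pos.2 ⟨i, hiS⟩
        omega
      have hSi : S = {i} := by
        obtain ⟨a, ha⟩ := Finset.card_eq_one.mp hScard
        have hia := Finset.mem_singleton.mp (ha ▸ hiS)
        rw [ha, hia]
      have hPxi : c.P x i = 1 := by rw [← hsumS, hSi, Finset.sum_singleton]
      have hAx : ∑ m, A m * x m ^ r = A i * x i ^ r := by
        rw [← hsumA, hSi, Finset.sum_singleton]
      rw [hPxi, hAx, div_self (mul_pos (hApos i) (Real.rpow_pos_of_pos hxipos r)).ne']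


/-- The Tullock formula for all subcontests. -/
lemma pM_formula (hlca : c.LCA) (r : ℝ) (A : N → ℝ) (hr : 0 < r)
    (hApos : ∀ j, 0 < A j)
    (hP : ∀ x, Feasible x → ∀ i, c.P x i = A i * x i ^ r / ∑ j, A j * x j ^ r) :
    ∀ M : Finset N, 2 ≤ M.card → ∀ x, FeasibleOn M x → ∀ i ∈ M,
      c.p M x i = A i * x i ^ r / ∑ j ∈ M, A j * x j ^ r := by
  intro M hM x hxM i hiM
  obtain ⟨m0, hm0M, hm0⟩ := hxM.2
  set y : N → ℝ := fun k => if k ∈ M then x k else 1 with hy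
  have hynn : ∀ k, 0 ≤ y k := by
    intro k
    rw [hy]; dsimp only
    split
    · exact hxM.1 k
    · norm_num
  have hym0 : y m0 = x m0 := by rw [hy]; simp [hm0M]
  have hyfeas : Feasible y := ⟨hynn, m0, by rw [hym0]; exact hm0⟩
  have hagree : ∀ k ∈ M, x k = y k := by
    intro k hk
    rw [hy]; dsimp only
    rw [if_pos hk]
  have hre := c.restrict M hM x y hxM hagree i hiM
  have hexy : ∃ k ∈ M, y k ≠ 0 := ⟨m0, hm0M, by rw [hym0]; exact hm0⟩
  have hlcy := hlca y hyfeas M hM hexy i hiM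
  set D := ∑ j2, A j2 * y j2 ^ r with hD
  have hym0pos : 0 < y m0 := by
    rw [hym0]; exact (hxM.1 m0).lt_of_ne (Ne.symm hm0)
  have hDpos : 0 < D := by
    apply Finset.sum_pos' (fun k _ => mul_nonneg (hApos k).le (Real.rpow_nonneg (hynn k) r))
    exact ⟨m0, mem_univ m0, mul_pos (hApos m0) (Real.rpow_pos_of_pos hym0pos r)⟩
  have hS : ∑ j2 ∈ M, c.P y j2 = (∑ j2 ∈ M, A j2 * y j2 ^ r) / D := by
    rw [Finset.sum_div]
    exact Finset.sum_congr rfl (fun j2 _ => hP y hyfeas j2)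
  have hTpos : 0 < ∑ j2 ∈ M, A j2 * y j2 ^ r :=
    Finset.sum_pos' (fun k _ => mul_nonneg (hApos k).le (Real.rpow_nonneg (hynn k) r))
      ⟨m0, hm0M, mul_pos (hApos m0) (Real.rpow_pos_of_pos hym0pos r)⟩
  rw [hP y hyfeas i, hS] at hlcy
  have h1 := congrArg (fun z => z * D) hlcy
  rw [div_mul_cancel₀ _ hDpos.ne', mul_assoc, div_mul_cancel₀ _ hDpos.ne'] at h1
  have hpy : c.p M y i = A i * y i ^ r / (∑ j2 ∈ M, A j2 * y j2 ^ r) := by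
    rw [eq_div_iff hTpos.ne']
    linarith [h1]
  rw [hre, hpy]
  have hyi : y i = x i := (hagree i hiM).symm
  have hterm : ∑ j2 ∈ M, A j2 * y j2 ^ r = ∑ j2 ∈ M, A j2 * x j2 ^ r :=
    Finset.sum_congr rfl (fun k hk => by rw [← hagree k hk])
  rw [hyi, hterm]

end Aux

/-- SM, LCA and RH hold iff the CSF is the asymmetric Tullock CSF
`p_i^M(x) = a_i x_i^r / ∑_{j∈M} a_j x_j^r`. -/
theorem statement2 {N : Type*} [Fintype N] [DecidableEq N]
    (hN : 3 ≤ Fintype.card N) (c : CSF N) :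
    (c.SM ∧ c.LCA ∧ c.RH) ↔
      ∃ (r : ℝ) (a : N → ℝ), 0 < r ∧ (∀ j, 0 < a j) ∧
        ∀ M : Finset N, 2 ≤ M.card → ∀ x, FeasibleOn M x → ∀ i ∈ M,
          c.p M x i = a i * x i ^ r / ∑ j ∈ M, a j * x j ^ r := by
  constructor
  · rintro ⟨hsm, hlca, hrh⟩
    obtain ⟨r, A, hr, hApos, hint⟩ := exists_tullock_interior c hN hsm hlca hrh
    have hP := P_formula c hN hsm hlca r A hr hApos hint
    exact ⟨r, A, hr, hApos, pM_formula c hN hlca r A hr hApos hP⟩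
  · rintro ⟨r, A, hr, hApos, hp⟩
    have hPf : ∀ x, Feasible x → ∀ i, c.P x i = A i * x i ^ r / ∑ j, A j * x j ^ r := by
      intro x hx i
      exact hp Finset.univ (card_univ_two hN) x (feasibleOn_univ hx) i (mem_univ i)
    have hDpos : ∀ x : N → ℝ, Feasible x → 0 < ∑ j, A j * x j ^ r := by
      intro x hx
      obtain ⟨j, hj⟩ := hx.2
      exact Finset.sum_pos' (fun k _ => mul_nonneg (hApos k).le (Real.rpow_nonneg (hx.1 k) r))
        ⟨j, mem_univ j, mul_pos (hApos j)
          (Real.rpow_pos_of_pos ((hx.1 j).lt_of_ne (Ne.symm hj)) r)⟩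
    refine ⟨?_, ?_, ?_⟩
    · -- SM
      intro x hx i hPi xi' hlt
      have hxi'pos : 0 < xi' := lt_of_le_of_lt (hx.1 i) hlt
      set y := Function.update x i xi' with hy
      have hynn : ∀ k, 0 ≤ y k := by
        intro k
        rcases Classical.em (k = i) with rfl | hk
        · rw [hy, Function.update_self]; exact hxi'pos.le
        · rw [hy, Function.update_of_ne hk]; exact hx.1 k
      have hyfeas : Feasible y :=
        ⟨hynn, i, by rw [hy, Function.update_self]; exact hxi'pos.ne'⟩
      set C := ∑ k ∈ Finset.univ.erase i, A k * x k ^ r with hC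
      have hxsum : ∑ k, A k * x k ^ r = C + A i * x i ^ r := by
        rw [hC, ← Finset.sum_erase_add _ _ (mem_univ i)]
      have hysum : ∑ k, A k * y k ^ r = C + A i * xi' ^ r := by
        rw [← Finset.sum_erase_add _ _ (mem_univ i)]
        congr 1
        · rw [hC]
          exact Finset.sum_congr rfl (fun k hk => by
            rw [hy, Function.update_of_ne (Finset.mem_erase.mp hk).1])
        · rw [hy, Function.update_self]
      have hCnn : 0 ≤ C :=
        Finset.sum_nonneg (fun k _ => mul_nonneg (hApos k).le (Real.rpow_nonneg (hx.1 k) r))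
      have hxD := hDpos x hx
      have hyD := hDpos y hyfeas
      have hd1 : 0 < C + A i * x i ^ r := by rw [← hxsum]; exact hxD
      have hd2 : 0 < C + A i * xi' ^ r := by rw [← hysum]; exact hyD
      have hCpos : 0 < C := by
        rcases lt_or_eq_of_le hCnn with h | h
        · exact h
        · exfalso
          have hu : 0 < A i * x i ^ r := by rw [← h] at hd1; linarith
          have : c.P x i = 1 := by
            rw [hPf x hx i, hxsum, ← h, zero_add, div_self hu.ne']
          linarith
      have hur : A i * x i ^ r < A i * xi' ^ r :=
        mul_lt_mul_of_pos_left (Real.rpow_lt_rpow (hx.1 i) hlt hr) (hApos i)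
      rw [hPf x hx i, hPf y hyfeas i, hxsum, hysum, hy, Function.update_self]
      rw [div_lt_div_iff₀ hd1 hd2]
      nlinarith [mul_lt_mul_of_pos_right hur hCpos]
    · -- LCA
      intro x hx M hM hex i hiM
      have hxM : FeasibleOn M x := ⟨hx.1, hex⟩
      obtain ⟨m0, hm0M, hm0⟩ := hex
      have hSpos : 0 < ∑ j ∈ M, A j * x j ^ r :=
        Finset.sum_pos' (fun k _ => mul_nonneg (hApos k).le (Real.rpow_nonneg (hx.1 k) r))
          ⟨m0, hm0M, mul_pos (hApos m0)
            (Real.rpow_pos_of_pos ((hx.1 m0).lt_of_ne (Ne.symm hm0)) r)⟩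
      have hxD := hDpos x hx
      have hsum : ∑ j ∈ M, c.P x j
          = (∑ j ∈ M, A j * x j ^ r) / (∑ j, A j * x j ^ r) := by
        rw [Finset.sum_div]
        exact Finset.sum_congr rfl (fun k _ => hPf x hx k)
      rw [hPf x hx i, hp M hM x hxM i hiM, hsum, div_mul_div_comm,
        div_eq_div_iff hxD.ne' (mul_pos hSpos hxD).ne']
      ring
    · -- RH
      intro x hx i j hxi hxj l hl
      set y := fun k => l * x k with hy
      have hyfeas : Feasible y := by
        obtain ⟨m, hm⟩ := hx.2
        exact ⟨fun k => mul_nonneg hl.le (hx.1 k), m, mul_ne_zero hl.ne' hm⟩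
      have hyi : 0 < y i := mul_pos hl hxi
      have hyj : 0 < y j := mul_pos hl hxj
      have key : ∀ z : N → ℝ, Feasible z → 0 < z i → 0 < z j →
          c.P z i / c.P z j = (A i * z i ^ r) / (A j * z j ^ r) := by
        intro z hz hzi hzj
        have hzD := hDpos z hz
        have hbj : 0 < A j * z j ^ r := mul_pos (hApos j) (Real.rpow_pos_of_pos hzj r)
        rw [hPf z hz i, hPf z hz j]
        field_simp
      rw [key x hx hxi hxj, key y hyfeas hyi hyj]
      have hyi' : y i = l * x i := rfl
      have hyj' : y j = l * x j := rfl
      rw [hyi', hyj', Real.mul_rpow hl.le (hx.1 i), Real.mul_rpow hl.le (hx.1 j)]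
      have hlr : 0 < l ^ r := Real.rpow_pos_of_pos hl r
      rw [div_eq_div_iff (mul_pos (hApos j) (Real.rpow_pos_of_pos hxj r)).ne'
        (mul_pos (hApos j) (mul_pos hlr (Real.rpow_pos_of_pos hxj r))).ne']
      ring
end
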